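/- arXiv:1203.0839 — 7 statements merged into one kernel-verified Lean document; each statement's English description precedes it below -/
import Mathlib

section
/- Fix real numbers a₁, α₁, b₁, β₁ with a₁ − α₁ ≥ 1, b₁ − β₁ ≥ 1 and a₁ + b₁ > 0. There exists a constant C > 0, depending only on a₁, α₁, b₁, β₁, with the following property. Let s' ∈ ℝ, let ρ(s) = 1 + exp(|s|), and let ρ₁, ρ₂ each be either ρ or ρ^{−1}. Let α, β, a, b : [s',∞) → ℝ be measurable functions and α₀, β₀, a₀, b₀ ≥ 0 such that for all u ≥ s': |α(u)| ≤ α₀·e^{α₁u}, |β(u)| ≤ β₀·e^{β₁u}, |a(u)| ≤ a₀·e^{−a₁u}, |b(u)| ≤ b₀·e^{−b₁u}. Define the kernel D(u,v) = α(u)·β(v)·∫₀^∞ a(u+z)·b(v+z) dz for u, v ≥ s'. Then (∫_{s'}^∞ ∫_{s'}^∞ D(u,v)² · ρ₂(u) · ρ₁(v)^{−1} du dv)^{1/2} ≤ C · (α₀β₀a₀b₀/(a₁+b₁)) · exp(−(a₁+b₁−α₁−β₁)·s' + |s'|). -/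
/-!
The inner integral is at most `a₀ b₀ / (a₁ + b₁) · e^{-a₁ u - b₁ v}`, so
`|D(u, v)| ≤ K e^{-(a₁ - α₁) u} e^{-(b₁ - β₁) v}` with `K = α₀ β₀ a₀ b₀ / (a₁ + b₁)`.
Both weights are at most `2 e^{|x|} ≤ 2 e^{|s'| - s'} e^x` on `[s', ∞)`, so the weighted `D²` is
dominated by a product of two exponentials with decay rates `2(a₁ - α₁) - 1 ≥ 1` and
`2(b₁ - β₁) - 1 ≥ 1`. The double integral is at most the product of their integrals, which
gives the bound with `C = 2`.
-/

open MeasureTheory Real Set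

/-- The weight function ρ(s) = 1 + exp |s|. -/
noncomputable def rhoWeight : ℝ → ℝ := fun s => 1 + Real.exp |s|

def IsRhoWeight (ρ : ℝ → ℝ) : Prop :=
  ρ = rhoWeight ∨ ρ = fun s => (rhoWeight s)⁻¹

lemma one_le_rhoWeight (s : ℝ) : 1 ≤ rhoWeight s := by
  unfold rhoWeight
  linarith [exp_pos |s|]

lemma rhoWeight_le (s : ℝ) : rhoWeight s ≤ 2 * exp |s| := by
  unfold rhoWeight
  linarith [one_le_exp (abs_nonneg s)]

lemma inv_rhoWeight_le (s : ℝ) : (rhoWeight s)⁻¹ ≤ 2 * exp |s| :=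
  (inv_le_one_of_one_le₀ (one_le_rhoWeight s)).trans (by linarith [one_le_exp (abs_nonneg s)])

namespace IsRhoWeight

variable {ρ : ℝ → ℝ}

lemma inv (h : IsRhoWeight ρ) : IsRhoWeight fun s => (ρ s)⁻¹ := by
  rcases h with rfl | rfl
  · exact Or.inr rfl
  · exact Or.inl (funext fun s => inv_inv _)

lemma pos (h : IsRhoWeight ρ) (s : ℝ) : 0 < ρ s := by
  rcases h with rfl | rfl
  · exact zero_lt_one.trans_le (one_le_rhoWeight s)
  · exact inv_pos.2 (zero_lt_one.trans_le (one_le_rhoWeight s))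

lemma le (h : IsRhoWeight ρ) (s : ℝ) : ρ s ≤ 2 * exp |s| := by
  rcases h with rfl | rfl
  · exact rhoWeight_le s
  · exact inv_rhoWeight_le s

end IsRhoWeight

lemma integral_exp_neg_mul_Ioi_le {k : ℝ} (hk : 1 ≤ k) (s : ℝ) :
    ∫ x in Ioi s, exp (-k * x) ≤ exp (-k * s) := by
  rw [integral_exp_mul_Ioi (by linarith) s, neg_div_neg_eq]
  exact div_le_self (exp_pos _).le hk

lemma exp_abs_le_of_le {s x : ℝ} (hx : s ≤ x) : exp |x| ≤ exp (|s| - s) * exp x := by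
  rw [← exp_add, exp_le_exp]
  have := abs_sub_abs_le_abs_sub x s
  rw [abs_of_nonneg (sub_nonneg.2 hx)] at this
  linarith

/-- The factor `exp |x|` in the weight costs one unit of the exponential decay rate. -/
lemma exp_neg_mul_sq_mul_le {s x c w : ℝ} (hx : s ≤ x) (hw : w ≤ 2 * exp |x|) :
    exp (-c * x) ^ 2 * w ≤ 2 * exp (|s| - s) * exp (-(2 * c - 1) * x) :=
  calc exp (-c * x) ^ 2 * w ≤ exp (-c * x) ^ 2 * (2 * (exp (|s| - s) * exp x)) := by
        gcongr
        exact hw.trans (by gcongr; exact exp_abs_le_of_le hx)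
    _ = 2 * exp (|s| - s) * exp (-(2 * c - 1) * x) := by
        rw [show -(2 * c - 1) * x = -c * x + -c * x + x by ring, exp_add, exp_add]
        ring

lemma integral_integral_le_mul_of_le {X Y : Type*} [MeasurableSpace X] [MeasurableSpace Y]
    {μ : Measure X} {ν : Measure Y} {F : X → Y → ℝ} {f : X → ℝ} {g : Y → ℝ}
    (hF : ∀ x y, 0 ≤ F x y) (hFfg : ∀ᵐ x ∂μ, ∀ᵐ y ∂ν, F x y ≤ f x * g y)
    (hf : Integrable f μ) (hg : Integrable g ν) :
    ∫ x, ∫ y, F x y ∂ν ∂μ ≤ (∫ x, f x ∂μ) * ∫ y, g y ∂ν := by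
  rw [← integral_mul_const]
  refine integral_mono_of_nonneg (.of_forall fun x => integral_nonneg (hF x))
    (hf.mul_const _) (hFfg.mono fun x hx => ?_)
  change ∫ y, F x y ∂ν ≤ f x * ∫ y, g y ∂ν
  rw [← integral_const_mul]
  exact integral_mono_of_nonneg (.of_forall (hF x)) (hg.const_mul _) hx

lemma abs_integral_mul_shift_le {a b : ℝ → ℝ} {s u v a₀ b₀ a₁ b₁ : ℝ} (hab : 0 < a₁ + b₁)
    (ha : ∀ x ≥ s, |a x| ≤ a₀ * exp (-a₁ * x)) (hb : ∀ x ≥ s, |b x| ≤ b₀ * exp (-b₁ * x))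
    (hu : s ≤ u) (hv : s ≤ v) :
    |∫ z in Ioi (0 : ℝ), a (u + z) * b (v + z)| ≤
      a₀ * b₀ / (a₁ + b₁) * exp (-a₁ * u - b₁ * v) := by
  have hbound : ∀ z ∈ Ioi (0 : ℝ), ‖a (u + z) * b (v + z)‖ ≤
      a₀ * b₀ * exp (-a₁ * u - b₁ * v) * exp (-(a₁ + b₁) * z) := by
    intro z hz
    have hau := ha (u + z) (by linarith [mem_Ioi.1 hz])
    have hbv := hb (v + z) (by linarith [mem_Ioi.1 hz])
    calc ‖a (u + z) * b (v + z)‖ = |a (u + z)| * |b (v + z)| := by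
          rw [norm_mul, norm_eq_abs, norm_eq_abs]
      _ ≤ a₀ * exp (-a₁ * (u + z)) * (b₀ * exp (-b₁ * (v + z))) :=
          mul_le_mul hau hbv (abs_nonneg _) ((abs_nonneg _).trans hau)
      _ = a₀ * b₀ * exp (-a₁ * u - b₁ * v) * exp (-(a₁ + b₁) * z) := by
          rw [mul_mul_mul_comm, mul_assoc (a₀ * b₀) (exp _), ← exp_add, ← exp_add]
          congr 2
          ring
  calc |∫ z in Ioi (0 : ℝ), a (u + z) * b (v + z)|
      ≤ ∫ z in Ioi (0 : ℝ), a₀ * b₀ * exp (-a₁ * u - b₁ * v) * exp (-(a₁ + b₁) * z) :=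
        norm_integral_le_of_norm_le ((exp_neg_integrableOn_Ioi 0 hab).const_mul _)
          (ae_restrict_of_forall_mem measurableSet_Ioi hbound)
    _ = a₀ * b₀ / (a₁ + b₁) * exp (-a₁ * u - b₁ * v) := by
        rw [integral_const_mul, integral_exp_mul_Ioi (by linarith) 0]
        field_simp
        simp

lemma abs_kernel_le {α β a b : ℝ → ℝ} {s u v α₀ β₀ a₀ b₀ α₁ β₁ a₁ b₁ : ℝ}
    (hab : 0 < a₁ + b₁) (hα : ∀ x ≥ s, |α x| ≤ α₀ * exp (α₁ * x))
    (hβ : ∀ x ≥ s, |β x| ≤ β₀ * exp (β₁ * x)) (ha : ∀ x ≥ s, |a x| ≤ a₀ * exp (-a₁ * x))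
    (hb : ∀ x ≥ s, |b x| ≤ b₀ * exp (-b₁ * x)) (hu : s ≤ u) (hv : s ≤ v) :
    |α u * β v * ∫ z in Ioi (0 : ℝ), a (u + z) * b (v + z)| ≤
      α₀ * β₀ * a₀ * b₀ / (a₁ + b₁) * exp (-(a₁ - α₁) * u) * exp (-(b₁ - β₁) * v) := by
  have hαu := hα u hu
  have hβv := hβ v hv
  calc |α u * β v * ∫ z in Ioi (0 : ℝ), a (u + z) * b (v + z)|
      = |α u| * |β v| * |∫ z in Ioi (0 : ℝ), a (u + z) * b (v + z)| := by rw [abs_mul, abs_mul]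
    _ ≤ α₀ * exp (α₁ * u) * (β₀ * exp (β₁ * v)) *
          (a₀ * b₀ / (a₁ + b₁) * exp (-a₁ * u - b₁ * v)) := by
        refine mul_le_mul (mul_le_mul hαu hβv (abs_nonneg _) ((abs_nonneg _).trans hαu))
          (abs_integral_mul_shift_le hab ha hb hu hv) (abs_nonneg _) ?_
        exact mul_nonneg ((abs_nonneg _).trans hαu) ((abs_nonneg _).trans hβv)
    _ = α₀ * β₀ * a₀ * b₀ / (a₁ + b₁) * exp (-(a₁ - α₁) * u) * exp (-(b₁ - β₁) * v) := by
        rw [show -(a₁ - α₁) * u = α₁ * u + -a₁ * u by ring,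
          show -a₁ * u - b₁ * v = -a₁ * u + -b₁ * v by ring,
          show -(b₁ - β₁) * v = β₁ * v + -b₁ * v by ring, exp_add, exp_add, exp_add]
        ring

lemma sq_mul_weight_le {D K s u v c d w₁ w₂ : ℝ} (hD : |D| ≤ K * exp (-c * u) * exp (-d * v))
    (hu : s ≤ u) (hv : s ≤ v) (hw₁ : 0 ≤ w₁) (hw₁' : w₁ ≤ 2 * exp |u|)
    (hw₂ : 0 ≤ w₂) (hw₂' : w₂ ≤ 2 * exp |v|) :
    D ^ 2 * w₁ * w₂ ≤ K ^ 2 * (2 * exp (|s| - s) * exp (-(2 * c - 1) * u)) *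
      (2 * exp (|s| - s) * exp (-(2 * d - 1) * v)) :=
  calc D ^ 2 * w₁ * w₂ ≤ (K * exp (-c * u) * exp (-d * v)) ^ 2 * w₁ * w₂ := by
        have := sq_le_sq' (neg_le_of_abs_le hD) (le_of_abs_le hD)
        gcongr
    _ = K ^ 2 * (exp (-c * u) ^ 2 * w₁) * (exp (-d * v) ^ 2 * w₂) := by ring
    _ ≤ _ := by
        have := exp_neg_mul_sq_mul_le (c := c) hu hw₁'
        have := exp_neg_mul_sq_mul_le (c := d) hv hw₂'
        gcongr

lemma integral_two_exp_mul_le {s c : ℝ} (hc : 1 ≤ c) :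
    ∫ x in Ioi s, 2 * exp (|s| - s) * exp (-(2 * c - 1) * x) ≤ 2 * exp (|s| - 2 * c * s) :=
  calc ∫ x in Ioi s, 2 * exp (|s| - s) * exp (-(2 * c - 1) * x)
      ≤ 2 * exp (|s| - s) * exp (-(2 * c - 1) * s) := by
        rw [integral_const_mul]
        gcongr
        exact integral_exp_neg_mul_Ioi_le (by linarith) s
    _ = 2 * exp (|s| - 2 * c * s) := by
        rw [mul_assoc, ← exp_add]
        ring_nf

theorem stmt_1 (a₁ α₁ b₁ β₁ : ℝ) (ha : 1 ≤ a₁ - α₁) (hb : 1 ≤ b₁ - β₁)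
    (hab : 0 < a₁ + b₁) :
    ∃ C > 0, ∀ (s' : ℝ) (ρ₁ ρ₂ : ℝ → ℝ),
      (ρ₁ = rhoWeight ∨ ρ₁ = fun s => (rhoWeight s)⁻¹) →
      (ρ₂ = rhoWeight ∨ ρ₂ = fun s => (rhoWeight s)⁻¹) →
      ∀ (α β a b : ℝ → ℝ) (α₀ β₀ a₀ b₀ : ℝ),
        Measurable α → Measurable β → Measurable a → Measurable b →
        0 ≤ α₀ → 0 ≤ β₀ → 0 ≤ a₀ → 0 ≤ b₀ →
        (∀ u ≥ s', |α u| ≤ α₀ * Real.exp (α₁ * u)) →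
        (∀ u ≥ s', |β u| ≤ β₀ * Real.exp (β₁ * u)) →
        (∀ u ≥ s', |a u| ≤ a₀ * Real.exp (-a₁ * u)) →
        (∀ u ≥ s', |b u| ≤ b₀ * Real.exp (-b₁ * u)) →
        Real.sqrt (∫ u in Ioi s', ∫ v in Ioi s',
            (α u * β v * ∫ z in Ioi (0 : ℝ), a (u + z) * b (v + z)) ^ 2
              * ρ₂ u * (ρ₁ v)⁻¹)
          ≤ C * (α₀ * β₀ * a₀ * b₀ / (a₁ + b₁)) *
              Real.exp (-(a₁ + b₁ - α₁ - β₁) * s' + |s'|) := by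
  refine ⟨2, two_pos, fun s' ρ₁ ρ₂ hρ₁ hρ₂ α β a b α₀ β₀ a₀ b₀ _ _ _ _ hα₀ hβ₀ ha₀ hb₀
    hα hβ ha' hb' => ?_⟩
  set K := α₀ * β₀ * a₀ * b₀ / (a₁ + b₁)
  have hw₁ : IsRhoWeight fun s => (ρ₁ s)⁻¹ := IsRhoWeight.inv hρ₁
  have hw₂ : IsRhoWeight ρ₂ := hρ₂
  have hmajorant (c : ℝ) (hc : 1 ≤ c) :
      IntegrableOn (fun x => 2 * exp (|s'| - s') * exp (-(2 * c - 1) * x)) (Ioi s') :=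
    (exp_neg_integrableOn_Ioi s' (by linarith)).const_mul _
  have hexp : exp (|s'| - 2 * (a₁ - α₁) * s') * exp (|s'| - 2 * (b₁ - β₁) * s') =
      exp (-(a₁ + b₁ - α₁ - β₁) * s' + |s'|) ^ 2 := by
    rw [sq, ← exp_add, ← exp_add]
    ring_nf
  calc _ ≤ sqrt (K ^ 2 * (2 * exp (|s'| - 2 * (a₁ - α₁) * s')) *
          (2 * exp (|s'| - 2 * (b₁ - β₁) * s'))) := by
        refine sqrt_le_sqrt ((integral_integral_le_mul_of_le
          (fun u v => mul_nonneg (mul_nonneg (sq_nonneg _) (hw₂.pos u).le) (hw₁.pos v).le)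
          (ae_restrict_of_forall_mem measurableSet_Ioi fun u hu =>
            ae_restrict_of_forall_mem measurableSet_Ioi fun v hv => ?_)
          ((hmajorant _ ha).const_mul (K ^ 2)) (hmajorant _ hb)).trans ?_)
        · exact sq_mul_weight_le (abs_kernel_le hab hα hβ ha' hb' (le_of_lt hu) (le_of_lt hv))
            (le_of_lt hu) (le_of_lt hv) (hw₂.pos u).le (hw₂.le u) (hw₁.pos v).le (hw₁.le v)
        · rw [integral_const_mul]
          gcongr
          · exact integral_two_exp_mul_le ha
          · exact integral_two_exp_mul_le hb
    _ = sqrt ((2 * K * exp (-(a₁ + b₁ - α₁ - β₁) * s' + |s'|)) ^ 2) := by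
        congr 1
        linear_combination 4 * K ^ 2 * hexp
    _ = _ := sqrt_sq (by positivity)
end

section
/- Let γ ∈ [1,∞) and let n : ℕ → ℕ satisfy n(N) ≥ N + 1 for all N and n(N)/N → γ as N → ∞. For each N, set α = n(N) − N − 1 and define β_N = 2^{−α/2} · N^{1/4} · (n(N)−1)^{1/4} · Γ(n(N))^{1/2} · Γ((N+3)/2) / ((N+1) · Γ(N+1)^{1/2} · Γ((n(N)+1)/2)). Then there exist a constant C > 0 and an integer N₀ such that for all N ≥ N₀, |β_N − 1/√2| ≤ C/N. -/
open Real Filter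

lemma aux1 (x : ℝ) (hx : 0 < x) :
    Real.Gamma (x + 1/2) ^ 2 ≤ x * Real.Gamma x ^ 2 := by
  have h := Real.convexOn_log_Gamma.2 (Set.mem_Ioi.mpr hx)
    (Set.mem_Ioi.mpr (by linarith : (0:ℝ) < x + 1))
    (by norm_num : (0:ℝ) ≤ (1:ℝ)/2) (by norm_num : (0:ℝ) ≤ (1:ℝ)/2) (by norm_num)
  simp only [smul_eq_mul, Function.comp_apply] at h
  have harg : (1:ℝ)/2 * x + 1/2 * (x + 1) = x + 1/2 := by ring
  rw [harg] at h
  have hg1 : 0 < Real.Gamma x := Real.Gamma_pos_of_pos hx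
  have hg2 : 0 < Real.Gamma (x + 1) := Real.Gamma_pos_of_pos (by linarith)
  have hg3 : 0 < Real.Gamma (x + 1/2) := Real.Gamma_pos_of_pos (by linarith)
  have h2 : Real.log (Real.Gamma (x + 1/2) ^ 2) ≤ Real.log (Real.Gamma x * Real.Gamma (x+1)) := by
    rw [Real.log_pow, Real.log_mul hg1.ne' hg2.ne']
    push_cast
    linarith
  have h3 : Real.Gamma (x + 1/2) ^ 2 ≤ Real.Gamma x * Real.Gamma (x+1) :=
    (Real.log_le_log_iff (by positivity) (by positivity)).mp h2
  rw [Real.Gamma_add_one hx.ne'] at h3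
  nlinarith [hg1]

lemma aux2 (x : ℝ) (hx : 1/2 < x) :
    (x - 1/2) * Real.Gamma x ^ 2 ≤ Real.Gamma (x + 1/2) ^ 2 := by
  have h0 : (0:ℝ) < x - 1/2 := by linarith
  have h := aux1 (x - 1/2) h0
  have e1 : x - 1/2 + 1/2 = x := by ring
  rw [e1] at h
  have e2 : Real.Gamma (x + 1/2) = (x - 1/2) * Real.Gamma (x - 1/2) := by
    have := Real.Gamma_add_one h0.ne'
    rw [show x - 1/2 + 1 = x + 1/2 by ring] at this
    exact this
  rw [e2]
  nlinarith [Real.Gamma_pos_of_pos h0, h]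

lemma beta4 (a m : ℝ) (ha : 0 < a) (hm : a + 1 ≤ m) :
    ((2:ℝ) ^ (-(m - a - 1) / 2) * a ^ ((1:ℝ)/4) * (m - 1) ^ ((1:ℝ)/4) *
      Real.Gamma m ^ ((1:ℝ)/2) * Real.Gamma ((a + 3)/2) /
      ((a + 1) * Real.Gamma (a + 1) ^ ((1:ℝ)/2) * Real.Gamma ((m + 1)/2))) ^ (4:ℕ)
    = 1/4 * (a/(a+1)) * ((m-1)/m) *
        (m/2 * Real.Gamma (m/2) ^ 2 / Real.Gamma ((m+1)/2) ^ 2) *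
        ((a+1)/2 * Real.Gamma ((a+1)/2) ^ 2 / Real.Gamma ((a+2)/2) ^ 2) := by
  have hm0 : (0:ℝ) < m := by linarith
  have hm1 : (0:ℝ) ≤ m - 1 := by linarith
  have hga : 0 < Real.Gamma a := Real.Gamma_pos_of_pos ha
  have hgm : 0 < Real.Gamma m := Real.Gamma_pos_of_pos hm0
  have hga1 : 0 < Real.Gamma (a+1) := Real.Gamma_pos_of_pos (by linarith)
  have hg1 : 0 < Real.Gamma (m/2) := Real.Gamma_pos_of_pos (by linarith)
  have hg2 : 0 < Real.Gamma ((m+1)/2) := Real.Gamma_pos_of_pos (by linarith)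
  have hg3 : 0 < Real.Gamma ((a+1)/2) := Real.Gamma_pos_of_pos (by linarith)
  have hg4 : 0 < Real.Gamma ((a+2)/2) := Real.Gamma_pos_of_pos (by linarith)
  have hsπ : (0:ℝ) < Real.sqrt π := Real.sqrt_pos.mpr pi_pos
  have hdup1 : Real.Gamma (m/2) * Real.Gamma ((m+1)/2)
      = Real.Gamma m * (2:ℝ) ^ (1 - m) * Real.sqrt π := by
    have := Real.Gamma_mul_Gamma_add_half (m/2)
    rw [show m/2 + 1/2 = (m+1)/2 by ring, show 2 * (m/2) = m by ring] at this
    exact this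
  have hdup2 : Real.Gamma ((a+1)/2) * Real.Gamma ((a+2)/2)
      = Real.Gamma (a+1) * (2:ℝ) ^ (-a) * Real.sqrt π := by
    have := Real.Gamma_mul_Gamma_add_half ((a+1)/2)
    rw [show (a+1)/2 + 1/2 = (a+2)/2 by ring, show 2 * ((a+1)/2) = a + 1 by ring,
      show (1:ℝ) - (a + 1) = -a by ring] at this
    exact this
  have hrec : Real.Gamma ((a+3)/2) = (a+1)/2 * Real.Gamma ((a+1)/2) := by
    have := Real.Gamma_add_one (show ((a+1)/2 : ℝ) ≠ 0 by positivity)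
    rw [show (a+1)/2 + 1 = (a+3)/2 by ring] at this
    exact this
  have h2m : (0:ℝ) < (2:ℝ) ^ (1 - m) := rpow_pos_of_pos two_pos _
  have h2a : (0:ℝ) < (2:ℝ) ^ (-a) := rpow_pos_of_pos two_pos _
  have hGm : Real.Gamma m = Real.Gamma (m/2) * Real.Gamma ((m+1)/2) / ((2:ℝ) ^ (1-m) * Real.sqrt π) := by
    field_simp
    linarith [hdup1]
  have hGa1 : Real.Gamma (a+1) = Real.Gamma ((a+1)/2) * Real.Gamma ((a+2)/2) / ((2:ℝ) ^ (-a) * Real.sqrt π) := by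
    field_simp
    linarith [hdup2]
  have hq : ∀ x : ℝ, 0 ≤ x → ∀ e : ℝ, (x ^ e) ^ (4:ℕ) = x ^ (e * 4) := by
    intro x hx e
    rw [← Real.rpow_natCast (x ^ e) 4, ← Real.rpow_mul hx]
    norm_num
  have hβ4 : ((2:ℝ) ^ (-(m - a - 1) / 2) * a ^ ((1:ℝ)/4) * (m - 1) ^ ((1:ℝ)/4) *
      Real.Gamma m ^ ((1:ℝ)/2) * Real.Gamma ((a + 3)/2) /
      ((a + 1) * Real.Gamma (a + 1) ^ ((1:ℝ)/2) * Real.Gamma ((m + 1)/2))) ^ (4:ℕ)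
      = (2:ℝ) ^ (-(m - a - 1) / 2 * 4) * a * (m - 1) * Real.Gamma m ^ 2 *
          Real.Gamma ((a+3)/2) ^ 4 /
          ((a+1) ^ 4 * Real.Gamma (a+1) ^ 2 * Real.Gamma ((m+1)/2) ^ 4) := by
    rw [div_pow]
    rw [mul_pow, mul_pow, mul_pow, mul_pow, mul_pow, mul_pow]
    rw [hq 2 (by norm_num), hq a ha.le, hq (m-1) hm1, hq _ hgm.le, hq _ hga1.le]
    rw [show (1:ℝ)/4 * 4 = 1 by norm_num, show (1:ℝ)/2 * 4 = 2 by norm_num]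
    rw [Real.rpow_one, Real.rpow_one]
    rw [show ((2:ℝ):ℝ) = ((2:ℕ):ℝ) by norm_num]
    rw [Real.rpow_natCast, Real.rpow_natCast]
  rw [hβ4, hGm, hGa1, hrec]
  have hC : (2:ℝ) ^ (-(m - a - 1) / 2 * 4) = ((2:ℝ) ^ (1-m)) ^ 2 / ((2:ℝ) ^ (-a)) ^ 2 := by
    rw [← Real.rpow_natCast ((2:ℝ) ^ (-a)) 2, ← Real.rpow_natCast ((2:ℝ) ^ (1-m)) 2,
      ← Real.rpow_mul (by norm_num), ← Real.rpow_mul (by norm_num),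
      ← Real.rpow_sub two_pos]
    norm_num
    ring_nf
  rw [hC]
  field_simp
  ring

lemma sbound (x : ℝ) (hx : 1/2 < x) :
    1 ≤ x * Real.Gamma x ^ 2 / Real.Gamma (x + 1/2) ^ 2 ∧
      x * Real.Gamma x ^ 2 / Real.Gamma (x + 1/2) ^ 2 ≤ x / (x - 1/2) := by
  have hx0 : (0:ℝ) < x := by linarith
  have hg : 0 < Real.Gamma (x + 1/2) := Real.Gamma_pos_of_pos (by linarith)
  have hg2 : 0 < Real.Gamma (x + 1/2) ^ 2 := by positivity
  constructor
  · rw [le_div_iff₀ hg2, one_mul]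
    exact aux1 x hx0
  · rw [div_le_div_iff₀ hg2 (by linarith : (0:ℝ) < x - 1/2)]
    nlinarith [aux2 x hx, hx0]

lemma quart (x y : ℝ) (hx : 0 ≤ x) (hy : 0 ≤ y) :
    |x - y| * y ^ 3 ≤ |x ^ 4 - y ^ 4| := by
  have h : x ^ 4 - y ^ 4 = (x - y) * (x ^ 3 + x ^ 2 * y + x * y ^ 2 + y ^ 3) := by ring
  rw [h, abs_mul]
  exact mul_le_mul_of_nonneg_left
    (le_trans (by nlinarith) (le_abs_self _)) (abs_nonneg _)

set_option maxHeartbeats 1000000 in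
theorem stmt_3 (γ : ℝ) (hγ : 1 ≤ γ) (n : ℕ → ℕ) (hn : ∀ N, N + 1 ≤ n N)
    (hlim : Tendsto (fun N : ℕ => (n N : ℝ) / (N : ℝ)) atTop (nhds γ)) :
    ∃ C > 0, ∃ N₀ : ℕ, ∀ N ≥ N₀,
      |(2 : ℝ) ^ (-((n N : ℝ) - (N : ℝ) - 1) / 2) * (N : ℝ) ^ ((1 : ℝ) / 4) *
            ((n N : ℝ) - 1) ^ ((1 : ℝ) / 4) *
            (Real.Gamma (n N)) ^ ((1 : ℝ) / 2) * Real.Gamma (((N : ℝ) + 3) / 2) /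
            (((N : ℝ) + 1) * (Real.Gamma ((N : ℝ) + 1)) ^ ((1 : ℝ) / 2) *
              Real.Gamma (((n N : ℝ) + 1) / 2))
          - 1 / Real.sqrt 2| ≤ C / N := by
  refine ⟨3, by norm_num, 1, fun N hN => ?_⟩
  have hN1 : (1:ℝ) ≤ (N:ℝ) := by exact_mod_cast hN
  set a : ℝ := (N:ℝ) with hadef
  set m : ℝ := ((n N : ℕ) : ℝ) with hmdef
  have ha : 0 < a := by linarith
  have hm : a + 1 ≤ m := by
    rw [hadef, hmdef]
    exact_mod_cast hn N
  set B : ℝ := (2 : ℝ) ^ (-(m - a - 1) / 2) * a ^ ((1 : ℝ) / 4) *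
      (m - 1) ^ ((1 : ℝ) / 4) * Real.Gamma m ^ ((1 : ℝ) / 2) *
      Real.Gamma ((a + 3) / 2) /
      ((a + 1) * Real.Gamma (a + 1) ^ ((1 : ℝ) / 2) * Real.Gamma ((m + 1) / 2))
    with hBdef
  -- nonnegativity of B
  have hB0 : 0 ≤ B := by
    rw [hBdef]
    apply div_nonneg
    · have hg := Real.Gamma_pos_of_pos (show (0:ℝ) < (a+3)/2 by linarith)
      have h1 : (0:ℝ) ≤ (2:ℝ) ^ (-(m - a - 1) / 2) := (Real.rpow_pos_of_pos two_pos _).le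
      have h2 : (0:ℝ) ≤ a ^ ((1:ℝ)/4) := Real.rpow_nonneg ha.le _
      have h3 : (0:ℝ) ≤ (m-1) ^ ((1:ℝ)/4) := Real.rpow_nonneg (by linarith) _
      have h4 : (0:ℝ) ≤ Real.Gamma m ^ ((1:ℝ)/2) :=
        Real.rpow_nonneg (Real.Gamma_pos_of_pos (by linarith)).le _
      exact mul_nonneg (mul_nonneg (mul_nonneg (mul_nonneg h1 h2) h3) h4) hg.le
    · have h5 : (0:ℝ) ≤ Real.Gamma (a+1) ^ ((1:ℝ)/2) :=
        Real.rpow_nonneg (Real.Gamma_pos_of_pos (by linarith)).le _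
      have h6 : (0:ℝ) < Real.Gamma ((m+1)/2) := Real.Gamma_pos_of_pos (by linarith)
      exact mul_nonneg (mul_nonneg (by linarith) h5) h6.le
  have h4 := beta4 a m ha hm
  rw [← hBdef] at h4
  set t : ℝ := 1/a with htdef
  have ht0 : 0 < t := by rw [htdef]; exact one_div_pos.mpr ha
  have ht1 : t ≤ 1 := by rw [htdef, div_le_one ha]; linarith
  have hs1 := sbound (m/2) (by linarith)
  rw [show m/2 + 1/2 = (m+1)/2 by ring] at hs1
  have hs2 := sbound ((a+1)/2) (by linarith)
  rw [show (a+1)/2 + 1/2 = (a+2)/2 by ring] at hs2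
  set s1 : ℝ := m/2 * Real.Gamma (m/2) ^ 2 / Real.Gamma ((m+1)/2) ^ 2 with hs1def
  set s2 : ℝ := (a+1)/2 * Real.Gamma ((a+1)/2) ^ 2 / Real.Gamma ((a+2)/2) ^ 2 with hs2def
  set q1 : ℝ := a/(a+1) with hq1def
  set q2 : ℝ := (m-1)/m with hq2def
  have hs1u : s1 ≤ 1 + t := by
    refine hs1.2.trans ?_
    rw [div_le_iff₀ (by linarith : (0:ℝ) < m/2 - 1/2)]
    have key : (1+t)*(m/2-1/2) - m/2 = ((m-1) - a)/(2*a) := by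
      rw [htdef]; field_simp; try ring
    have hnn : (0:ℝ) ≤ ((m-1) - a)/(2*a) := by
      apply div_nonneg (by linarith) (by linarith)
    linarith
  have hs2u : s2 ≤ 1 + t := by
    refine hs2.2.trans ?_
    rw [div_le_iff₀ (by linarith : (0:ℝ) < (a+1)/2 - 1/2)]
    have key : (1+t)*((a+1)/2-1/2) - (a+1)/2 = 0 := by
      rw [htdef]; field_simp; try ring
    linarith
  have hq1u : q1 ≤ 1 := by rw [hq1def, div_le_one (by linarith)]; linarith
  have hq2u : q2 ≤ 1 := by rw [hq2def, div_le_one (by linarith)]; linarith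
  have hq1l : 1 - t ≤ q1 := by
    rw [hq1def, le_div_iff₀ (by linarith : (0:ℝ) < a + 1)]
    have key : a - (1-t)*(a+1) = 1/a := by
      rw [htdef]; field_simp; try ring
    have h1a : (0:ℝ) < 1/a := one_div_pos.mpr ha
    linarith
  have hq2l : 1 - t ≤ q2 := by
    rw [hq2def, le_div_iff₀ (by linarith : (0:ℝ) < m)]
    have key : (m-1) - (1-t)*m = (m-a)/a := by
      rw [htdef]; field_simp; try ring
    have : (0:ℝ) ≤ (m-a)/a := div_nonneg (by linarith) ha.le
    linarith
  have hs1l : (1:ℝ) ≤ s1 := hs1.1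
  have hs2l : (1:ℝ) ≤ s2 := hs2.1
  clear_value B t s1 s2 q1 q2
  clear hs1 hs2 hBdef hs1def hs2def hq1def hq2def
  have hq10 : (0:ℝ) ≤ q1 := le_trans (by linarith) hq1l
  have hq20 : (0:ℝ) ≤ q2 := le_trans (by linarith) hq2l
  have hs10 : (0:ℝ) ≤ s1 := by linarith
  have hs20 : (0:ℝ) ≤ s2 := by linarith
  have hprod : B ^ (4:ℕ) = 1/4 * (q1 * q2 * s1 * s2) := by rw [h4]; ring
  have htt : t * t ≤ t := by
    have := mul_le_mul_of_nonneg_right ht1 ht0.le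
    linarith [this]
  have htt0 : (0:ℝ) ≤ t * t := mul_nonneg ht0.le ht0.le
  have hupB : B ^ (4:ℕ) ≤ 1/4 * (1 + 3*t) := by
    rw [hprod]
    have hb1 : (0:ℝ) ≤ 1 * 1 := by norm_num
    have hb2 : (0:ℝ) ≤ 1 * 1 * (1+t) := by norm_num; linarith
    have h1 : q1 * q2 * s1 * s2 ≤ 1 * 1 * (1+t) * (1+t) := by
      apply mul_le_mul _ hs2u hs20 hb2
      apply mul_le_mul _ hs1u hs10 hb1
      exact mul_le_mul hq1u hq2u hq20 (by norm_num)
    have hexp : 1 * 1 * (1+t) * (1+t) = 1 + 2*t + t*t := by ring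
    linarith
  have hloB : 1/4 * (1 - 2*t) ≤ B ^ (4:ℕ) := by
    rw [hprod]
    have hb1 : (0:ℝ) ≤ q1 * q2 := mul_nonneg hq10 hq20
    have hb2 : (0:ℝ) ≤ q1 * q2 * s1 := mul_nonneg hb1 hs10
    have h1 : (1-t) * (1-t) * 1 * 1 ≤ q1 * q2 * s1 * s2 := by
      apply mul_le_mul _ hs2l (by norm_num) hb2
      apply mul_le_mul _ hs1l (by norm_num) hb1
      exact mul_le_mul hq1l hq2l (by linarith) hq10
    have hexp : (1-t) * (1-t) * 1 * 1 = 1 - 2*t + t*t := by ring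
    linarith
  have habs4 : |B ^ (4:ℕ) - 1/4| ≤ 3/4 * t := by
    rw [abs_le]
    constructor
    · linarith
    · linarith
  have hsq : Real.sqrt 2 ^ 2 = 2 := Real.sq_sqrt (by norm_num)
  have hsqpos : 0 < Real.sqrt 2 := Real.sqrt_pos.mpr (by norm_num)
  have hc4 : (1 / Real.sqrt 2) ^ 4 = 1/4 := by
    rw [div_pow, one_pow, show (Real.sqrt 2)^4 = ((Real.sqrt 2)^2)^2 by ring, hsq]
    norm_num
  have hc3 : (1:ℝ)/3 ≤ (1 / Real.sqrt 2) ^ 3 := by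
    rw [div_pow, one_pow]
    have hle : Real.sqrt 2 ≤ 3/2 := by
      rw [show (3/2:ℝ) = Real.sqrt ((3/2)^2) from (Real.sqrt_sq (by norm_num)).symm]
      apply Real.sqrt_le_sqrt
      norm_num
    have hs3 : (Real.sqrt 2) ^ 3 ≤ 3 := by
      have he : Real.sqrt 2 ^ 3 = 2 * Real.sqrt 2 := by
        rw [pow_succ, hsq]
      rw [he]; linarith
    have hs3p : (0:ℝ) < (Real.sqrt 2) ^ 3 := by positivity
    rw [div_le_div_iff₀ (by norm_num) hs3p]
    linarith
  have hquart := quart B (1 / Real.sqrt 2) hB0 (by positivity)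
  rw [hc4] at hquart
  have habs : |B - 1 / Real.sqrt 2| ≤ 9/4 * t := by
    have h1 : |B - 1 / Real.sqrt 2| * (1/3) ≤ |B - 1 / Real.sqrt 2| * (1 / Real.sqrt 2) ^ 3 :=
      mul_le_mul_of_nonneg_left hc3 (abs_nonneg _)
    linarith [hquart, habs4]
  have hfin : (3:ℝ) / a = 3 * t := by rw [htdef]; ring
  calc |B - 1 / Real.sqrt 2| ≤ 9/4 * t := habs
    _ ≤ 3 * t := by linarith
    _ = 3 / a := hfin.symm
end

section
/- Let γ ∈ [1,∞) and let n : ℕ → ℕ satisfy n(N) ≥ N + 1 for all N and n(N)/N → γ as N → ∞. For each N with n(N) ≥ 3, define ρ̃_N = N^{1/4} · (n(N)−1)^{1/4} · σ̃_{n(N)−2,N}^{1/2} · σ̃_{n(N)−1,N−1} / μ̃_{n(N)−2,N}. Then there exist a constant C > 0 and an integer N₀ such that for all N ≥ N₀, |ρ̃_N − 1| ≤ C/N. -/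
open Real Filter

/-- μ̃_{m,k} = (√(m+1/2) + √(k+1/2))². -/
noncomputable def muTilde (m k : ℝ) : ℝ :=
  (Real.sqrt (m + 1 / 2) + Real.sqrt (k + 1 / 2)) ^ 2

/-- σ̃_{m,k} = (√(m+1/2) + √(k+1/2)) · (1/√(m+1/2) + 1/√(k+1/2))^{1/3}. -/
noncomputable def sigt (m k : ℝ) : ℝ :=
  (Real.sqrt (m + 1 / 2) + Real.sqrt (k + 1 / 2)) *
    (1 / Real.sqrt (m + 1 / 2) + 1 / Real.sqrt (k + 1 / 2)) ^ ((1 : ℝ) / 3)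

lemma aux_mul {x y a b : ℝ} (hx : |x - 1| ≤ a) (hy : |y - 1| ≤ b) :
    |x * y - 1| ≤ a + b + a * b := by
  have ha : 0 ≤ a := le_trans (abs_nonneg _) hx
  have hb : 0 ≤ b := le_trans (abs_nonneg _) hy
  have h : x * y - 1 = (x - 1) * (y - 1) + ((x - 1) + (y - 1)) := by ring
  rw [h]
  have h1 := abs_add_le ((x-1)*(y-1)) ((x-1)+(y-1))
  have h2 := abs_add_le (x-1) (y-1)
  have h3 : |(x - 1) * (y - 1)| = |x - 1| * |y - 1| := abs_mul _ _
  nlinarith [abs_nonneg (x-1), abs_nonneg (y-1)]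

lemma aux_rpow {x e : ℝ} (hx : 0 < x) (he0 : 0 ≤ e) (he1 : e ≤ 1) :
    |x ^ e - 1| ≤ |x - 1| := by
  rcases le_total 1 x with h | h
  · have h1 : x ^ e ≤ x := by
      calc x ^ e ≤ x ^ (1:ℝ) := Real.rpow_le_rpow_of_exponent_le h he1
      _ = x := Real.rpow_one x
    have h2 : 1 ≤ x ^ e := Real.one_le_rpow h he0
    rw [abs_of_nonneg (by linarith), abs_of_nonneg (by linarith)]; linarith
  · have h1 : x ≤ x ^ e := by
      calc x = x ^ (1:ℝ) := (Real.rpow_one x).symm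
      _ ≤ x ^ e := Real.rpow_le_rpow_of_exponent_ge hx h he1
    have h2 : x ^ e ≤ 1 := Real.rpow_le_one hx.le h he0
    rw [abs_of_nonpos (by linarith), abs_of_nonpos (by linarith)]; linarith

set_option maxHeartbeats 1000000 in
theorem stmt_6 (γ : ℝ) (hγ : 1 ≤ γ) (n : ℕ → ℕ) (hn : ∀ N, N + 1 ≤ n N)
    (hlim : Tendsto (fun N : ℕ => (n N : ℝ) / (N : ℝ)) atTop (nhds γ)) :
    ∃ C > 0, ∃ N₀ : ℕ, ∀ N ≥ N₀,
      |(N : ℝ) ^ ((1 : ℝ) / 4) * ((n N : ℝ) - 1) ^ ((1 : ℝ) / 4) *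
            (sigt ((n N : ℝ) - 2) (N : ℝ)) ^ ((1 : ℝ) / 2) *
            sigt ((n N : ℝ) - 1) ((N : ℝ) - 1) /
            muTilde ((n N : ℝ) - 2) (N : ℝ)
          - 1| ≤ C / N := by
  clear hγ hlim
  refine ⟨63, by norm_num, 1, fun N hN => ?_⟩
  have hN1 : (1:ℝ) ≤ (N:ℝ) := by exact_mod_cast hN
  have hNpos : (0:ℝ) < (N:ℝ) := by linarith
  have hxN : (N:ℝ) + 1 ≤ (n N : ℝ) := by exact_mod_cast hn N
  set x := (n N : ℝ) with hxdef
  have hx2 : (2:ℝ) ≤ x := by linarith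
  set A := x - 3/2 with hAdef
  set A' := x - 1/2 with hA'def
  set B := (N:ℝ) + 1/2 with hBdef
  set B' := (N:ℝ) - 1/2 with hB'def
  have hA : 0 < A := by rw [hAdef]; linarith
  have hA' : 0 < A' := by rw [hA'def]; linarith
  have hB : 0 < B := by rw [hBdef]; linarith
  have hB' : 0 < B' := by rw [hB'def]; linarith
  have hsA : 0 < Real.sqrt A := Real.sqrt_pos.2 hA
  have hsA' : 0 < Real.sqrt A' := Real.sqrt_pos.2 hA'
  have hsB : 0 < Real.sqrt B := Real.sqrt_pos.2 hB
  have hsB' : 0 < Real.sqrt B' := Real.sqrt_pos.2 hB'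
  set s := Real.sqrt A + Real.sqrt B with hsdef
  set t := Real.sqrt A' + Real.sqrt B' with htdef
  have hs : 0 < s := add_pos hsA hsB
  have ht : 0 < t := add_pos hsA' hsB'
  have hx1 : (0:ℝ) < x - 1 := by linarith
  -- rewrite sigt and muTilde
  have e0 : sigt (x - 2) (N:ℝ) = s * (1 / Real.sqrt A + 1 / Real.sqrt B) ^ ((1:ℝ)/3) := by
    unfold sigt
    rw [show x - 2 + 1 / 2 = A by rw [hAdef]; ring, show (N:ℝ) + 1 / 2 = B from hBdef.symm]
  have e0' : sigt (x - 1) ((N:ℝ) - 1) =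
      t * (1 / Real.sqrt A' + 1 / Real.sqrt B') ^ ((1:ℝ)/3) := by
    unfold sigt
    rw [show x - 1 + 1 / 2 = A' by rw [hA'def]; ring,
      show (N:ℝ) - 1 + 1 / 2 = B' by rw [hB'def]; ring]
  have em : muTilde (x - 2) (N:ℝ) = s ^ 2 := by
    unfold muTilde
    rw [show x - 2 + 1 / 2 = A by rw [hAdef]; ring, show (N:ℝ) + 1 / 2 = B from hBdef.symm]
  have hv : 0 < 1 / Real.sqrt A + 1 / Real.sqrt B := by positivity
  have hv' : 0 < 1 / Real.sqrt A' + 1 / Real.sqrt B' := by positivity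
  have hsig1 : 0 < sigt (x - 2) (N:ℝ) := by
    rw [e0]; exact mul_pos hs (Real.rpow_pos_of_pos hv _)
  have hsig2 : 0 < sigt (x - 1) ((N:ℝ) - 1) := by
    rw [e0']; exact mul_pos ht (Real.rpow_pos_of_pos hv' _)
  -- log identities
  have hveq : 1 / Real.sqrt A + 1 / Real.sqrt B = s / (Real.sqrt A * Real.sqrt B) := by
    rw [hsdef]; field_simp; ring
  have hveq' : 1 / Real.sqrt A' + 1 / Real.sqrt B' = t / (Real.sqrt A' * Real.sqrt B') := by
    rw [htdef]; field_simp; ring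
  have hlogv : Real.log (1 / Real.sqrt A + 1 / Real.sqrt B)
      = Real.log s - Real.log A / 2 - Real.log B / 2 := by
    rw [hveq, Real.log_div hs.ne' (mul_pos hsA hsB).ne', Real.log_mul hsA.ne' hsB.ne',
      Real.log_sqrt hA.le, Real.log_sqrt hB.le]; ring
  have hlogv' : Real.log (1 / Real.sqrt A' + 1 / Real.sqrt B')
      = Real.log t - Real.log A' / 2 - Real.log B' / 2 := by
    rw [hveq', Real.log_div ht.ne' (mul_pos hsA' hsB').ne', Real.log_mul hsA'.ne' hsB'.ne',
      Real.log_sqrt hA'.le, Real.log_sqrt hB'.le]; ring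
  have hlog1 : Real.log (sigt (x - 2) (N:ℝ))
      = (4/3) * Real.log s - (1/6) * Real.log A - (1/6) * Real.log B := by
    rw [e0, Real.log_mul hs.ne' (Real.rpow_pos_of_pos hv _).ne', Real.log_rpow hv, hlogv]; ring
  have hlog2 : Real.log (sigt (x - 1) ((N:ℝ) - 1))
      = (4/3) * Real.log t - (1/6) * Real.log A' - (1/6) * Real.log B' := by
    rw [e0', Real.log_mul ht.ne' (Real.rpow_pos_of_pos hv' _).ne', Real.log_rpow hv', hlogv']; ring
  have hlogm : Real.log (muTilde (x - 2) (N:ℝ)) = 2 * Real.log s := by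
    rw [em, Real.log_pow]; push_cast; ring
  -- the target product
  set u := t / s with hudef
  have hu : 0 < u := div_pos ht hs
  set P := u * u ^ ((1:ℝ)/3) * ((N:ℝ)/B) ^ ((1:ℝ)/12) * ((x-1)/A) ^ ((1:ℝ)/12)
      * ((N:ℝ)/B') ^ ((1:ℝ)/6) * ((x-1)/A') ^ ((1:ℝ)/6) with hPdef
  have hP : 0 < P := by
    rw [hPdef]
    exact mul_pos (mul_pos (mul_pos (mul_pos (mul_pos hu (Real.rpow_pos_of_pos hu _))
      (Real.rpow_pos_of_pos (div_pos hNpos hB) _)) (Real.rpow_pos_of_pos (div_pos hx1 hA) _))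
      (Real.rpow_pos_of_pos (div_pos hNpos hB') _)) (Real.rpow_pos_of_pos (div_pos hx1 hA') _)
  have hLpos : 0 < (N : ℝ) ^ ((1 : ℝ) / 4) * (x - 1) ^ ((1 : ℝ) / 4) *
      (sigt (x - 2) (N:ℝ)) ^ ((1 : ℝ) / 2) * sigt (x - 1) ((N:ℝ) - 1) /
      muTilde (x - 2) (N:ℝ) := by
    apply div_pos
    · exact mul_pos (mul_pos (mul_pos (Real.rpow_pos_of_pos hNpos _)
        (Real.rpow_pos_of_pos hx1 _)) (Real.rpow_pos_of_pos hsig1 _)) hsig2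
    · rw [em]; positivity
  have hlogP : Real.log ((N : ℝ) ^ ((1 : ℝ) / 4) * (x - 1) ^ ((1 : ℝ) / 4) *
      (sigt (x - 2) (N:ℝ)) ^ ((1 : ℝ) / 2) * sigt (x - 1) ((N:ℝ) - 1) /
      muTilde (x - 2) (N:ℝ)) = Real.log P := by
    rw [Real.log_div (by positivity) (by rw [em]; positivity),
      Real.log_mul (by positivity) hsig2.ne',
      Real.log_mul (by positivity) (Real.rpow_pos_of_pos hsig1 _).ne',
      Real.log_mul (Real.rpow_pos_of_pos hNpos _).ne' (Real.rpow_pos_of_pos hx1 _).ne',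
      Real.log_rpow hNpos, Real.log_rpow hx1, Real.log_rpow hsig1, hlog1, hlog2, hlogm,
      hPdef,
      Real.log_mul (by positivity) (Real.rpow_pos_of_pos (div_pos hx1 hA') _).ne',
      Real.log_mul (by positivity) (Real.rpow_pos_of_pos (div_pos hNpos hB') _).ne',
      Real.log_mul (by positivity) (Real.rpow_pos_of_pos (div_pos hx1 hA) _).ne',
      Real.log_mul (by positivity) (Real.rpow_pos_of_pos (div_pos hNpos hB) _).ne',
      Real.log_mul hu.ne' (Real.rpow_pos_of_pos hu _).ne',
      Real.log_rpow hu, Real.log_rpow (div_pos hNpos hB), Real.log_rpow (div_pos hx1 hA),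
      Real.log_rpow (div_pos hNpos hB'), Real.log_rpow (div_pos hx1 hA'),
      hudef, Real.log_div ht.ne' hs.ne', Real.log_div hNpos.ne' hB.ne',
      Real.log_div hx1.ne' hA.ne', Real.log_div hNpos.ne' hB'.ne',
      Real.log_div hx1.ne' hA'.ne']
    ring
  have heq : (N : ℝ) ^ ((1 : ℝ) / 4) * (x - 1) ^ ((1 : ℝ) / 4) *
      (sigt (x - 2) (N:ℝ)) ^ ((1 : ℝ) / 2) * sigt (x - 1) ((N:ℝ) - 1) /
      muTilde (x - 2) (N:ℝ) = P := by
    have h := congrArg Real.exp hlogP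
    rwa [Real.exp_log hLpos, Real.exp_log hP] at h
  rw [heq]
  -- now the bounds
  have h1N : 1 / (N:ℝ) ≤ 1 := by rw [div_le_one hNpos]; exact hN1
  have h1Npos : 0 < 1 / (N:ℝ) := by positivity
  -- bound on u
  have hdA : Real.sqrt A' - Real.sqrt A = 1 / (Real.sqrt A' + Real.sqrt A) := by
    rw [eq_div_iff (by positivity)]
    have h3 : A' - A = 1 := by rw [hAdef, hA'def]; ring
    linear_combination Real.sq_sqrt hA'.le - Real.sq_sqrt hA.le + h3
  have hdB : Real.sqrt B - Real.sqrt B' = 1 / (Real.sqrt B + Real.sqrt B') := by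
    rw [eq_div_iff (by positivity)]
    have h3 : B - B' = 1 := by rw [hBdef, hB'def]; ring
    linear_combination Real.sq_sqrt hB.le - Real.sq_sqrt hB'.le + h3
  have hmono1 : Real.sqrt B ≤ Real.sqrt A' := by
    apply Real.sqrt_le_sqrt; rw [hBdef, hA'def]; linarith
  have hmono2 : Real.sqrt B' ≤ Real.sqrt A := by
    apply Real.sqrt_le_sqrt; rw [hB'def, hAdef]; linarith
  have hts : |t - s| ≤ 1 / (Real.sqrt B + Real.sqrt B') := by
    have h : t - s = 1 / (Real.sqrt A' + Real.sqrt A) - 1 / (Real.sqrt B + Real.sqrt B') := by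
      rw [htdef, hsdef]; linarith [hdA, hdB]
    rw [h, abs_le]
    constructor
    · have : 0 < 1 / (Real.sqrt A' + Real.sqrt A) := by positivity
      linarith
    · have hle : 1 / (Real.sqrt A' + Real.sqrt A) ≤ 1 / (Real.sqrt B + Real.sqrt B') :=
        one_div_le_one_div_of_le (by positivity) (by linarith)
      have : 0 < 1 / (Real.sqrt B + Real.sqrt B') := by positivity
      linarith
  have hsge : Real.sqrt B + Real.sqrt B' ≤ s := by rw [hsdef]; linarith
  have hBB'pos : 0 < Real.sqrt B + Real.sqrt B' := by positivity
  have hu1 : |u - 1| ≤ 1 / (N:ℝ) := by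
    have h : u - 1 = (t - s) / s := by rw [hudef]; field_simp
    rw [h, abs_div, abs_of_pos hs]
    calc |t - s| / s ≤ (1 / (Real.sqrt B + Real.sqrt B')) / (Real.sqrt B + Real.sqrt B') :=
          div_le_div₀ (by positivity) hts hBB'pos hsge
      _ = 1 / (Real.sqrt B + Real.sqrt B') ^ 2 := by rw [div_div]; ring_nf
      _ ≤ 1 / (N:ℝ) := by
          rw [div_le_div_iff₀ (by positivity) hNpos]
          have hBB : B + B' = 2 * (N:ℝ) := by rw [hBdef, hB'def]; ring
          have hexp : (Real.sqrt B + Real.sqrt B') ^ 2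
              = B + 2 * (Real.sqrt B * Real.sqrt B') + B' := by
            rw [add_sq, Real.sq_sqrt hB.le, Real.sq_sqrt hB'.le]; ring
          have hpos := mul_pos hsB hsB'
          linarith [hexp, hBB, hpos]
  have hu2 : |u ^ ((1:ℝ)/3) - 1| ≤ 1 / (N:ℝ) :=
    le_trans (aux_rpow hu (by norm_num) (by norm_num)) hu1
  have hp1 : |u * u ^ ((1:ℝ)/3) - 1| ≤ 3 / (N:ℝ) := by
    have h := aux_mul hu1 hu2
    have hsq : 1/(N:ℝ) * (1/(N:ℝ)) ≤ 1/(N:ℝ) := mul_le_of_le_one_right h1Npos.le h1N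
    calc |u * u ^ ((1:ℝ)/3) - 1| ≤ 1/(N:ℝ) + 1/(N:ℝ) + 1/(N:ℝ) * (1/(N:ℝ)) := h
      _ ≤ 3 / (N:ℝ) := by rw [show (3:ℝ)/(N:ℝ) = 1/(N:ℝ) + 1/(N:ℝ) + 1/(N:ℝ) by ring]; linarith
  -- bounds on the four ratio factors
  have hb2 : |(N:ℝ)/B - 1| ≤ 1 / (N:ℝ) := by
    have h : (N:ℝ)/B - 1 = -((1/2)/B) := by field_simp [hB.ne']; rw [hBdef]; ring
    rw [h, abs_neg, abs_of_pos (by positivity), div_le_div_iff₀ hB hNpos, hBdef]; linarith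
  have hb3 : |(x-1)/A - 1| ≤ 1 / (N:ℝ) := by
    have h : (x-1)/A - 1 = (1/2)/A := by field_simp [hA.ne']; rw [hAdef]; ring
    rw [h, abs_of_pos (by positivity), div_le_div_iff₀ hA hNpos, hAdef]; linarith
  have hb4 : |(N:ℝ)/B' - 1| ≤ 1 / (N:ℝ) := by
    have h : (N:ℝ)/B' - 1 = (1/2)/B' := by field_simp [hB'.ne']; rw [hB'def]; ring
    rw [h, abs_of_pos (by positivity), div_le_div_iff₀ hB' hNpos, hB'def]; linarith
  have hb5 : |(x-1)/A' - 1| ≤ 1 / (N:ℝ) := by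
    have h : (x-1)/A' - 1 = -((1/2)/A') := by field_simp [hA'.ne']; rw [hA'def]; ring
    rw [h, abs_neg, abs_of_pos (by positivity), div_le_div_iff₀ hA' hNpos, hA'def]; linarith
  have hq2 : |((N:ℝ)/B) ^ ((1:ℝ)/12) - 1| ≤ 1 / (N:ℝ) :=
    le_trans (aux_rpow (div_pos hNpos hB) (by norm_num) (by norm_num)) hb2
  have hq3 : |((x-1)/A) ^ ((1:ℝ)/12) - 1| ≤ 1 / (N:ℝ) :=
    le_trans (aux_rpow (div_pos hx1 hA) (by norm_num) (by norm_num)) hb3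
  have hq4 : |((N:ℝ)/B') ^ ((1:ℝ)/6) - 1| ≤ 1 / (N:ℝ) :=
    le_trans (aux_rpow (div_pos hNpos hB') (by norm_num) (by norm_num)) hb4
  have hq5 : |((x-1)/A') ^ ((1:ℝ)/6) - 1| ≤ 1 / (N:ℝ) :=
    le_trans (aux_rpow (div_pos hx1 hA') (by norm_num) (by norm_num)) hb5
  -- combine
  have step : ∀ {z w : ℝ} {c : ℝ}, |z - 1| ≤ c / (N:ℝ) → |w - 1| ≤ 1 / (N:ℝ) → 0 ≤ c →
      |z * w - 1| ≤ (2 * c + 1) / (N:ℝ) := by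
    intro z w c hz hw hc
    have h := aux_mul hz hw
    have hsq : c/(N:ℝ) * (1/(N:ℝ)) ≤ c/(N:ℝ) := mul_le_of_le_one_right (by positivity) h1N
    calc |z * w - 1| ≤ c/(N:ℝ) + 1/(N:ℝ) + c/(N:ℝ) * (1/(N:ℝ)) := h
      _ ≤ (2*c+1) / (N:ℝ) := by
          rw [show (2*c+1)/(N:ℝ) = c/(N:ℝ) + 1/(N:ℝ) + c/(N:ℝ) by ring]; linarith
  have c1 := step hp1 hq2 (by norm_num)
  norm_num at c1
  have c2 := step c1 hq3 (by norm_num)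
  norm_num at c2
  have c3 := step c2 hq4 (by norm_num)
  norm_num at c3
  have c4 := step c3 hq5 (by norm_num)
  norm_num at c4
  rw [hPdef]
  exact c4
end

section
/- Let s₀ ∈ ℝ, let A, B ≥ 0, and let g : ℝ → ℝ be differentiable on [s₀, ∞) with |g'(t)| ≤ A·e^{−t} for all t ≥ s₀ and |g(t)| ≤ B·e^{−t/2} for all t ≥ s₀. Then |g(s)| ≤ (A + B)·e^{−s} for all s ≥ s₀. -/
open Real Set

theorem stmt_11 (s₀ A B : ℝ) (hA : 0 ≤ A) (hB : 0 ≤ B) (g : ℝ → ℝ)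
    (hdiff : ∀ t ∈ Ici s₀, DifferentiableAt ℝ g t)
    (hg' : ∀ t ∈ Ici s₀, |deriv g t| ≤ A * Real.exp (-t))
    (hg : ∀ t ∈ Ici s₀, |g t| ≤ B * Real.exp (-t / 2)) :
    ∀ s ∈ Ici s₀, |g s| ≤ (A + B) * Real.exp (-s) := by
  intro s hs
  set S := max s₀ (max s (2 * s)) with hS
  have hSs₀ : s₀ ≤ S := le_max_left _ _
  have hsS : s ≤ S := le_trans (le_max_left _ _) (le_max_right _ _)
  have h2s : 2 * s ≤ S := le_trans (le_max_right _ _) (le_max_right _ _)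
  have hsub : Set.uIcc s S ⊆ Ici s₀ := by
    rw [Set.uIcc_of_le hsS]
    intro x hx
    exact le_trans hs hx.1
  -- FTC
  have hint : IntervalIntegrable (deriv g) MeasureTheory.volume s S := by
    apply IntervalIntegrable.mono_fun' (g := fun t => A * Real.exp (-t))
    · exact (Continuous.intervalIntegrable (by continuity) _ _)
    · exact (measurable_deriv g).aestronglyMeasurable
    · filter_upwards [MeasureTheory.ae_restrict_mem measurableSet_uIoc] with x hx
      exact hg' x (hsub (Set.uIoc_subset_uIcc hx))
  have hftc : ∫ t in s..S, deriv g t = g S - g s :=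
    intervalIntegral.integral_deriv_eq_sub (fun x hx => hdiff x (hsub hx)) hint
  have hcont : Continuous fun t : ℝ => A * Real.exp (-t) :=
    continuous_const.mul (Real.continuous_exp.comp continuous_neg)
  have hbound : |∫ t in s..S, deriv g t| ≤ ∫ t in s..S, A * Real.exp (-t) := by
    calc |∫ t in s..S, deriv g t| ≤ ∫ t in s..S, |deriv g t| :=
          intervalIntegral.abs_integral_le_integral_abs hsS
      _ ≤ ∫ t in s..S, A * Real.exp (-t) := by
          apply intervalIntegral.integral_mono_on hsS hint.abs
            (hcont.intervalIntegrable _ _)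
          intro x hx
          exact hg' x (hsub (Set.Icc_subset_uIcc hx))
  have hintval : ∫ t in s..S, A * Real.exp (-t) = A * (Real.exp (-s) - Real.exp (-S)) := by
    rw [intervalIntegral.integral_const_mul, intervalIntegral.integral_comp_neg (fun x => Real.exp x), integral_exp]
  have h1 : |g s| ≤ |g S| + A * (Real.exp (-s) - Real.exp (-S)) := by
    have : |g s| ≤ |g S| + |g S - g s| := by
      have := abs_sub_abs_le_abs_sub (g s) (g S)
      have h2 := abs_sub_comm (g s) (g S)
      linarith [abs_nonneg (g S - g s)]
    calc |g s| ≤ |g S| + |g S - g s| := this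
      _ ≤ |g S| + A * (Real.exp (-s) - Real.exp (-S)) := by
          rw [← hftc]
          linarith [hbound, hintval.le, hintval.ge]
  have hgS : |g S| ≤ B * Real.exp (-s) := by
    calc |g S| ≤ B * Real.exp (-S / 2) := hg S hSs₀
      _ ≤ B * Real.exp (-s) := by
          apply mul_le_mul_of_nonneg_left _ hB
          apply Real.exp_le_exp.2
          linarith
  have hpos : 0 < Real.exp (-S) := Real.exp_pos _
  nlinarith [Real.exp_pos (-s)]
end

section
/- Let f, g : ℝ → ℝ be Lebesgue integrable with ∫_ℝ g(y) dy = 0. Then for every t ∈ ℝ, the double integral ∫_ℝ ∫₀^∞ [ f(u+z)·g(t+z) + g(u+z)·f(t+z) ] dz du is absolutely convergent and equals (∫_ℝ f(y) dy) · ∫_t^∞ g(y) dy. -/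
open MeasureTheory Real Set

theorem stmt_13 (f g : ℝ → ℝ) (hf : Integrable f) (hg : Integrable g)
    (hg0 : ∫ y, g y = 0) (t : ℝ) :
    IntegrableOn
      (fun p : ℝ × ℝ => f (p.1 + p.2) * g (t + p.2) + g (p.1 + p.2) * f (t + p.2))
      (univ ×ˢ Ioi (0 : ℝ)) ∧
    (∫ u, ∫ z in Ioi (0 : ℝ), (f (u + z) * g (t + z) + g (u + z) * f (t + z)))
      = (∫ y, f y) * ∫ y in Ioi t, g y := by
  set ν := (volume : Measure ℝ).restrict (Ioi (0:ℝ)) with hν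
  have hgt : Integrable (fun z => g (t + z)) ν := (hg.comp_add_left t).integrableOn
  have hft : Integrable (fun z => f (t + z)) ν := (hf.comp_add_left t).integrableOn
  have hT : MeasurePreserving (fun z : ℝ × ℝ => (z.1 + z.2, z.2))
      ((volume : Measure ℝ).prod ν) ((volume : Measure ℝ).prod ν) :=
    measurePreserving_add_prod _ _
  have h1 : Integrable (fun p : ℝ × ℝ => f (p.1 + p.2) * g (t + p.2))
      ((volume : Measure ℝ).prod ν) := by
    have hF := hf.mul_prod hgt
    exact (hT.integrable_comp hF.aestronglyMeasurable).mpr hF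
  have h2 : Integrable (fun p : ℝ × ℝ => g (p.1 + p.2) * f (t + p.2))
      ((volume : Measure ℝ).prod ν) := by
    have hF := hg.mul_prod hft
    exact (hT.integrable_comp hF.aestronglyMeasurable).mpr hF
  have hsum := h1.add h2
  have hrestr : (volume : Measure (ℝ × ℝ)).restrict (univ ×ˢ Ioi (0:ℝ))
      = (volume : Measure ℝ).prod ν := by
    rw [Measure.volume_eq_prod, ← Measure.prod_restrict, Measure.restrict_univ]
  constructor
  · rw [IntegrableOn, hrestr]; exact hsum
  · rw [integral_integral_swap hsum]
    have inner : ∀ z : ℝ, (∫ u, (f (u + z) * g (t + z) + g (u + z) * f (t + z)))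
        = (∫ y, f y) * g (t + z) := by
      intro z
      rw [integral_add ((hf.comp_add_right z).mul_const _) ((hg.comp_add_right z).mul_const _),
        integral_mul_const, integral_mul_const, integral_add_right_eq_self,
        integral_add_right_eq_self, hg0, zero_mul, add_zero]
    simp_rw [inner]
    rw [integral_const_mul]
    congr 1
    have hemb : MeasurableEmbedding (fun z : ℝ => t + z) := measurableEmbedding_addLeft t
    have hpre : (fun z : ℝ => t + z) ⁻¹' Ioi t = Ioi (0:ℝ) := by
      ext z; simp
    calc (∫ z in Ioi (0:ℝ), g (t + z))
        = ∫ z in (fun z : ℝ => t + z) ⁻¹' Ioi t, g (t + z) := by rw [hpre]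
      _ = ∫ y in Ioi t, g y :=
          (measurePreserving_add_left volume t).setIntegral_preimage_emb hemb _ _
end

section
/- Let γ ∈ [1,∞) and let n : ℕ → ℕ satisfy n(N) ≥ N + 1 for all N and n(N)/N → γ as N → ∞. For s ∈ ℝ and N with n(N) ≥ 3, define s'(s) = (μ̃_{n(N)−1,N−1} − μ̃_{n(N)−2,N}) / σ̃_{n(N)−2,N} + (σ̃_{n(N)−1,N−1} / σ̃_{n(N)−2,N}) · s. Then for every s₀ ∈ ℝ and every s₁ > 0 there exist a constant C > 0 and an integer N₀ such that for all N ≥ N₀ and all s ∈ [s₀, s₁·N^{1/6}], |s'(s) − s| ≤ C·N^{−1/3}. -/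
open Real Filter Set

lemma sqrt_le_of_sq' {x z : ℝ} (hz : 0 ≤ z) (h : x ≤ z^2) : Real.sqrt x ≤ z := by
  calc Real.sqrt x ≤ Real.sqrt (z^2) := Real.sqrt_le_sqrt h
  _ = z := Real.sqrt_sq hz

lemma le_sqrt_of_sq' {x z : ℝ} (hz : 0 ≤ z) (h : z^2 ≤ x) : z ≤ Real.sqrt x := by
  calc z = Real.sqrt (z^2) := (Real.sqrt_sq hz).symm
  _ ≤ Real.sqrt x := Real.sqrt_le_sqrt h

lemma third_pow_cube {x : ℝ} (hx : 0 ≤ x) : (x ^ ((1:ℝ)/3))^(3:ℕ) = x := by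
  rw [← Real.rpow_natCast (x ^ ((1:ℝ)/3)) 3, ← Real.rpow_mul hx]; norm_num

lemma rpow_third_sub_mul {x y : ℝ} (hx : 0 < x) (hy : 0 < y) :
    |x ^ ((1:ℝ)/3) - y ^ ((1:ℝ)/3)| * (y ^ ((1:ℝ)/3))^2 ≤ |x - y| := by
  set a := x ^ ((1:ℝ)/3) with ha_def
  set b := y ^ ((1:ℝ)/3) with hb_def
  have ha : 0 < a := Real.rpow_pos_of_pos hx _
  have hb : 0 < b := Real.rpow_pos_of_pos hy _
  have hx3 : a^(3:ℕ) = x := third_pow_cube hx.le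
  have hy3 : b^(3:ℕ) = y := third_pow_cube hy.le
  have hfac : x - y = (a - b) * (a^2 + a*b + b^2) := by rw [← hx3, ← hy3]; ring
  have hpos : 0 < a^2 + a*b + b^2 := by positivity
  have key : |x - y| = |a - b| * (a^2 + a*b + b^2) := by
    rw [hfac, abs_mul, abs_of_pos hpos]
  rw [key]
  have h1 : b^2 ≤ a^2 + a*b + b^2 := by nlinarith
  exact mul_le_mul_of_nonneg_left h1 (abs_nonneg _)

private lemma aux1_s15 (x S c : ℝ) (h : x*S = c) (hS : 0 < S) (hc : c ≤ 0) : x ≤ 0 := by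
  nlinarith

private lemma aux2_s15 (x S m N K : ℝ) (h : x*S = N+1-m) (hS : N/2 ≤ S) (hm2 : m ≤ K*N)
    (hx : x ≤ 0) (hN : 0 < N) : 2*(2*(-x)) ≤ 2*(4*K) := by
  nlinarith

private lemma aux3 (x S : ℝ) (h : x*S = 1) (hS : 0 < S) : 0 ≤ x := by
  nlinarith

private lemma aux4 (x S t : ℝ) (h : x*S = 1) (hx : 0 ≤ x) (ht : t ≤ S) : x*t ≤ 1 := by
  nlinarith

private lemma aux5 (X q : ℝ) (hq : 0 < q) (h : q^3 ≤ X*q) : q^2 ≤ X := by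
  nlinarith

private lemma aux6 (Y c q : ℝ) (hq : 1 ≤ q) (hY : 0 ≤ Y) (h : Y*q^7 ≤ c*q^4) : Y ≤ c := by
  have hq0 : (0:ℝ) < q := lt_of_lt_of_le one_pos hq
  have h1 : q^4 ≤ q^7 := pow_le_pow_right₀ hq (by norm_num)
  have h2 : Y*q^4 ≤ Y*q^7 := mul_le_mul_of_nonneg_left h1 hY
  nlinarith [pow_pos hq0 4]

private lemma aux7 (K : ℝ) (hK : 1 ≤ K) : K ≤ K^3 := by
  nlinarith [mul_le_mul hK hK zero_le_one (le_trans zero_le_one hK)]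

set_option maxHeartbeats 1000000 in
lemma main_est (K N m s B : ℝ) (hK : 2 ≤ K) (hN : 4 ≤ N) (hm1 : N + 1 ≤ m)
    (hm2 : m ≤ K * N) (hB : 0 ≤ B) (hs : |s| ≤ B * N ^ ((1:ℝ)/6)) :
    |(muTilde (m - 1) (N - 1) - muTilde (m - 2) N) / sigt (m - 2) N +
        sigt (m - 1) (N - 1) / sigt (m - 2) N * s - s| ≤
      (4*K^2 + 12*K^4*B) * N ^ (-(1:ℝ)/3) := by
  have hN0 : (0:ℝ) < N := by linarith
  have hN1 : (1:ℝ) ≤ N := by linarith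
  have hK0 : (0:ℝ) < K := by linarith
  have hK1 : (1:ℝ) ≤ K := by linarith
  have hK2N : K*N ≤ K^2*N := by nlinarith
  have hK4 : (4:ℝ) ≤ K^2 := by nlinarith
  have hK3 : (1:ℝ) ≤ K^3 := by nlinarith
  set q := N ^ ((1:ℝ)/6) with hq_def
  have hq0 : 0 < q := Real.rpow_pos_of_pos hN0 _
  have hq1 : 1 ≤ q := by
    calc (1:ℝ) = (1:ℝ) ^ ((1:ℝ)/6) := (Real.one_rpow _).symm
    _ ≤ q := Real.rpow_le_rpow zero_le_one hN1 (by norm_num)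
  have hq6 : q^(6:ℕ) = N := by
    rw [hq_def, ← Real.rpow_natCast (N ^ ((1:ℝ)/6)) 6, ← Real.rpow_mul hN0.le]
    norm_num
  have hq2 : q^(2:ℕ) = N ^ ((1:ℝ)/3) := by
    rw [hq_def, ← Real.rpow_natCast (N ^ ((1:ℝ)/6)) 2, ← Real.rpow_mul hN0.le]
    norm_num
  have hq3 : q^(3:ℕ) = Real.sqrt N := by
    rw [Real.sqrt_eq_rpow, hq_def, ← Real.rpow_natCast (N ^ ((1:ℝ)/6)) 3,
      ← Real.rpow_mul hN0.le]
    norm_num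
  have hqN13 : N ^ (-(1:ℝ)/3) = 1 / q^2 := by
    have h : (-(1:ℝ)/3) = -((1:ℝ)/3) := by norm_num
    rw [h, Real.rpow_neg hN0.le, ← hq2, inv_eq_one_div]
  clear_value q
  clear hq_def
  -- square roots
  set sa := Real.sqrt (m - 1 + 1/2) with hsa_def
  set sb := Real.sqrt (N - 1 + 1/2) with hsb_def
  set sc := Real.sqrt (m - 2 + 1/2) with hsc_def
  set sd := Real.sqrt (N + 1/2) with hsd_def
  have emu1 : muTilde (m-1) (N-1) = (sa+sb)^2 := rfl
  have emu2 : muTilde (m-2) N = (sc+sd)^2 := rfl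
  have esig1 : sigt (m-1) (N-1) = (sa+sb) * (1/sa + 1/sb) ^ ((1:ℝ)/3) := rfl
  have esig2 : sigt (m-2) N = (sc+sd) * (1/sc + 1/sd) ^ ((1:ℝ)/3) := rfl
  have hpa : sa^2 = m - 1 + 1/2 := Real.sq_sqrt (by linarith)
  have hpb : sb^2 = N - 1 + 1/2 := Real.sq_sqrt (by linarith)
  have hpc : sc^2 = m - 2 + 1/2 := Real.sq_sqrt (by linarith)
  have hpd : sd^2 = N + 1/2 := Real.sq_sqrt (by linarith)
  have hsa1 : q^3 ≤ sa := by rw [hq3, hsa_def]; exact Real.sqrt_le_sqrt (by linarith)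
  have hsd1 : q^3 ≤ sd := by rw [hq3, hsd_def]; exact Real.sqrt_le_sqrt (by linarith)
  have hsb1 : q^3/2 ≤ sb := by
    rw [hsb_def]
    refine le_sqrt_of_sq' (by positivity) ?_
    have h : (q^3/2)^2 = q^(6:ℕ)/4 := by ring
    rw [h, hq6]; linarith
  have hsc1 : q^3/2 ≤ sc := by
    rw [hsc_def]
    refine le_sqrt_of_sq' (by positivity) ?_
    have h : (q^3/2)^2 = q^(6:ℕ)/4 := by ring
    rw [h, hq6]; linarith
  have hsa2 : sa ≤ K*q^3 := by
    rw [hsa_def]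
    refine sqrt_le_of_sq' (by positivity) ?_
    have h : (K*q^3)^2 = K^2*q^(6:ℕ) := by ring
    rw [h, hq6]; linarith
  have hsc2 : sc ≤ K*q^3 := by
    rw [hsc_def]
    refine sqrt_le_of_sq' (by positivity) ?_
    have h : (K*q^3)^2 = K^2*q^(6:ℕ) := by ring
    rw [h, hq6]; linarith
  have hsb2 : sb ≤ K*q^3 := by
    rw [hsb_def]
    refine sqrt_le_of_sq' (by positivity) ?_
    have h : (K*q^3)^2 = K^2*q^(6:ℕ) := by ring
    rw [h, hq6]
    linarith [mul_le_mul_of_nonneg_right hK4 hN0.le]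
  have hsd2 : sd ≤ K*q^3 := by
    rw [hsd_def]
    refine sqrt_le_of_sq' (by positivity) ?_
    have h : (K*q^3)^2 = K^2*q^(6:ℕ) := by ring
    rw [h, hq6]
    linarith [mul_le_mul_of_nonneg_right hK4 hN0.le]
  clear_value sa sb sc sd
  clear hsa_def hsb_def hsc_def hsd_def
  have hq3pos : (0:ℝ) < q^3 := by positivity
  have hsa0 : 0 < sa := lt_of_lt_of_le hq3pos hsa1
  have hsd0 : 0 < sd := lt_of_lt_of_le hq3pos hsd1
  have hsb0 : 0 < sb := lt_of_lt_of_le (by positivity) hsb1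
  have hsc0 : 0 < sc := lt_of_lt_of_le (by positivity) hsc1
  -- mu difference
  have hmu : muTilde (m-1) (N-1) - muTilde (m-2) N = 2*(sa*sb - sc*sd) := by
    rw [emu1, emu2]
    linear_combination hpa + hpb - hpc - hpd
  have hprod : (sa*sb - sc*sd) * (sa*sb + sc*sd) = N + 1 - m := by
    linear_combination sb^2 * hpa + (m-1+1/2) * hpb - sd^2 * hpc - (m-2+1/2) * hpd
  have hsumpos : 0 < sa*sb + sc*sd := by
    have h1 := mul_pos hsa0 hsb0
    have h2 := mul_pos hsc0 hsd0
    linarith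
  have hxneg : sa*sb - sc*sd ≤ 0 := aux1_s15 _ _ _ hprod hsumpos (by linarith)
  have hDmu : |muTilde (m-1) (N-1) - muTilde (m-2) N| ≤ 4*K := by
    rw [hmu, abs_mul, abs_of_nonpos hxneg, abs_of_pos (by norm_num : (0:ℝ) < 2)]
    have hS : N/2 ≤ sa*sb + sc*sd := by
      have h := mul_le_mul hsc1 hsd1 (by positivity) hsc0.le
      have h2 := mul_pos hsa0 hsb0
      have h3 : (q^3/2)*(q^3) = q^(6:ℕ)/2 := by ring
      rw [h3, hq6] at h
      linarith
    linarith [aux2_s15 _ _ _ _ _ hprod hS hm2 hxneg hN0]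
  -- sigma pieces
  set T1 := 1/sa + 1/sb with hT1_def
  set T2 := 1/sc + 1/sd with hT2_def
  have hT1pos : 0 < T1 := by rw [hT1_def]; positivity
  have hT2pos : 0 < T2 := by rw [hT2_def]; positivity
  set u1 := T1 ^ ((1:ℝ)/3) with hu1_def
  set u2 := T2 ^ ((1:ℝ)/3) with hu2_def
  have hu1pos : 0 < u1 := Real.rpow_pos_of_pos hT1pos _
  have hu2pos : 0 < u2 := Real.rpow_pos_of_pos hT2pos _
  have hu13 : u1^(3:ℕ) = T1 := third_pow_cube hT1pos.le
  have hu23 : u2^(3:ℕ) = T2 := third_pow_cube hT2pos.le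
  have hdu_raw := rpow_third_sub_mul hT1pos hT2pos
  rw [← hu1_def, ← hu2_def] at hdu_raw
  have esig1' : sigt (m-1) (N-1) = (sa+sb) * u1 := by rw [esig1, hu1_def, hT1_def]
  have esig2' : sigt (m-2) N = (sc+sd) * u2 := by rw [esig2, hu2_def, hT2_def]
  have hT1q : T1 * q^3 ≤ 3 := by
    have h1 : q^3/sa ≤ 1 := (div_le_one hsa0).mpr hsa1
    have h2 : q^3/sb ≤ 2 := by rw [div_le_iff₀ hsb0]; linarith
    have h3 : T1*q^3 = q^3/sa + q^3/sb := by rw [hT1_def]; field_simp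
    rw [h3]; linarith
  have hT2q : 1 ≤ T2 * (K*q^3) := by
    have h1 : 1 ≤ (K*q^3)/sc := by rw [le_div_iff₀ hsc0]; linarith
    have h2 : 0 ≤ (K*q^3)/sd := by positivity
    have h3 : T2*(K*q^3) = (K*q^3)/sc + (K*q^3)/sd := by rw [hT2_def]; field_simp
    rw [h3]; linarith
  clear_value T1 T2 u1 u2
  clear hu1_def hu2_def esig1 esig2 emu1 emu2 hmu
  have hu1up : u1 * q ≤ 2 := by
    have hcube : u1^(3:ℕ) ≤ (2/q)^(3:ℕ) := by
      rw [hu13, div_pow, le_div_iff₀ (by positivity)]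
      linarith [hT1q]
    have h := le_of_pow_le_pow_left₀ (by norm_num) (by positivity : (0:ℝ) ≤ 2/q) hcube
    exact (le_div_iff₀ hq0).mp h
  have hu2lo : 1 ≤ u2 * (K*q) := by
    have hcube : (1/(K*q))^(3:ℕ) ≤ u2^(3:ℕ) := by
      rw [hu23, div_pow, one_pow, div_le_iff₀ (by positivity)]
      have hh : 0 ≤ T2*q^3*(K^3 - K) :=
        mul_nonneg (mul_nonneg hT2pos.le (pow_nonneg hq0.le 3))
          (by linarith [aux7 K hK1])
      have e : T2*(K*q)^3 = T2*(K*q^3) + T2*q^3*(K^3-K) := by ring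
      rw [e]; linarith
    have h := le_of_pow_le_pow_left₀ (by norm_num) hu2pos.le hcube
    rw [div_le_iff₀ (by positivity)] at h
    linarith
  -- differences of square roots
  have hac : (sa - sc) * (sa + sc) = 1 := by linear_combination hpa - hpc
  have hdb : (sd - sb) * (sd + sb) = 1 := by linear_combination hpd - hpb
  have hac0 : 0 ≤ sa - sc := aux3 _ _ hac (by linarith)
  have hdb0 : 0 ≤ sd - sb := aux3 _ _ hdb (by linarith)
  have hac1 : (sa - sc) * q^3 ≤ 1 := aux4 _ _ _ hac hac0 (by linarith)
  have hdb1 : (sd - sb) * q^3 ≤ 1 := aux4 _ _ _ hdb hdb0 (by linarith)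
  have hdS : |(sa + sb) - (sc + sd)| * q^3 ≤ 2 := by
    have h1 : ((sa+sb)-(sc+sd))*q^3 ≤ 2 := by
      have := mul_nonneg hdb0 hq3pos.le
      linarith [hac1]
    have h2 : -(((sa+sb)-(sc+sd))*q^3) ≤ 2 := by
      have := mul_nonneg hac0 hq3pos.le
      linarith [hdb1]
    calc |(sa + sb) - (sc + sd)| * q^3 = |((sa+sb)-(sc+sd)) * q^3| := by
          rw [abs_mul, abs_of_pos hq3pos]
    _ ≤ 2 := abs_le.mpr ⟨by linarith, h1⟩
  have hq9pos : (0:ℝ) < q^9 := by positivity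
  have hdT : |T1 - T2| * q^9 ≤ 4 := by
    have e1 : 1/sc - 1/sa = (sa - sc)/(sc*sa) := by field_simp
    have e2 : 1/sb - 1/sd = (sd - sb)/(sb*sd) := by field_simp
    have hA0 : 0 ≤ (sa - sc)/(sc*sa) := div_nonneg hac0 (by positivity)
    have hB0 : 0 ≤ (sd - sb)/(sb*sd) := div_nonneg hdb0 (by positivity)
    have b1 : (sa - sc)/(sc*sa) * q^9 ≤ 2 := by
      rw [div_mul_eq_mul_div, div_le_iff₀ (by positivity)]
      have h := mul_le_mul hsc1 hsa1 (by positivity) hsc0.le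
      have h2 := mul_le_mul_of_nonneg_right hac1 (pow_nonneg hq0.le 6)
      have h3 : (q^3/2)*(q^3) = q^(6:ℕ)/2 := by ring
      rw [h3] at h
      linarith [h, h2]
    have b2 : (sd - sb)/(sb*sd) * q^9 ≤ 2 := by
      rw [div_mul_eq_mul_div, div_le_iff₀ (by positivity)]
      have h := mul_le_mul hsb1 hsd1 (by positivity) hsb0.le
      have h2 := mul_le_mul_of_nonneg_right hdb1 (pow_nonneg hq0.le 6)
      have h3 : (q^3/2)*(q^3) = q^(6:ℕ)/2 := by ring
      rw [h3] at h
      linarith [h, h2]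
    have eT : T1 - T2 = -((sa - sc)/(sc*sa)) + (sd - sb)/(sb*sd) := by
      rw [hT1_def, hT2_def, ← e1, ← e2]; ring
    calc |T1 - T2| * q^9 = |(T1 - T2) * q^9| := by rw [abs_mul, abs_of_pos hq9pos]
    _ ≤ 4 := by
        rw [eT]
        have l1 : (-((sa - sc)/(sc*sa)) + (sd - sb)/(sb*sd)) * q^9 ≤ 4 := by
          have := mul_nonneg hA0 hq9pos.le
          linarith [b2]
        have l2 : -((-((sa - sc)/(sc*sa)) + (sd - sb)/(sb*sd)) * q^9) ≤ 4 := by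
          have := mul_nonneg hB0 hq9pos.le
          linarith [b1]
        exact abs_le.mpr ⟨by linarith, l1⟩
  have hdu : |u1 - u2| * q^7 ≤ 4*K^2 := by
    have h1 : 1 ≤ u2^2 * (K*q)^2 := by
      calc (1:ℝ) = 1^2 := by norm_num
      _ ≤ (u2*(K*q))^2 := by
          apply pow_le_pow_left₀ zero_le_one hu2lo
      _ = u2^2 * (K*q)^2 := by ring
    have step1 : |u1-u2| * q^7 ≤ |u1-u2| * q^7 * (u2^2*(K*q)^2) :=
      le_mul_of_one_le_right (by positivity) h1
    have step2 : |u1-u2| * q^7 * (u2^2*(K*q)^2) = (|u1-u2| * u2^2) * q^9 * K^2 := by ring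
    have step3 : (|u1-u2| * u2^2) * q^9 * K^2 ≤ |T1-T2| * q^9 * K^2 := by
      apply mul_le_mul_of_nonneg_right _ (by positivity)
      exact mul_le_mul_of_nonneg_right hdu_raw (by positivity)
    have step4 : |T1-T2| * q^9 * K^2 ≤ 4*K^2 := by
      have := mul_le_mul_of_nonneg_right hdT (sq_nonneg K)
      linarith
    linarith [step1, step2.le, step2.ge, step3, step4]
  -- sigma bounds
  have hsig2pos : 0 < sigt (m-2) N := by
    rw [esig2']; exact mul_pos (by linarith) hu2pos
  have hsig2lo : q^2 ≤ sigt (m-2) N * K := by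
    rw [esig2']
    have hsum : q^3 ≤ sc + sd := by linarith
    have t1 : q^3 * 1 ≤ (sc+sd) * (u2*(K*q)) :=
      mul_le_mul hsum hu2lo zero_le_one (by linarith)
    have t2 : q^3 ≤ ((sc+sd)*u2*K)*q := by linarith [t1]
    exact aux5 _ _ hq0 t2
  have hdsig : |sigt (m-1) (N-1) - sigt (m-2) N| * q^7 ≤ 12*K^3*q^3 := by
    rw [esig1', esig2']
    have expand : (sa+sb)*u1 - (sc+sd)*u2 = ((sa+sb)-(sc+sd))*u1 + (sc+sd)*(u1-u2) := by
      ring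
    have tri : |(sa+sb)*u1 - (sc+sd)*u2| ≤
        |(sa+sb)-(sc+sd)| * u1 + (sc+sd) * |u1-u2| := by
      rw [expand]
      refine (abs_add_le _ _).trans ?_
      rw [abs_mul, abs_mul, abs_of_pos hu1pos,
        abs_of_pos (show (0:ℝ) < sc+sd by linarith)]
    have bb1 : |(sa+sb)-(sc+sd)| * u1 * q^7 ≤ 2*2*q^3 := by
      calc |(sa+sb)-(sc+sd)| * u1 * q^7
          = (|(sa+sb)-(sc+sd)| * q^3) * (u1*q) * q^3 := by ring
      _ ≤ (2*2) * q^3 := by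
          apply mul_le_mul_of_nonneg_right _ (pow_nonneg hq0.le 3)
          exact mul_le_mul hdS hu1up (by positivity) (by norm_num)
      _ = 2*2*q^3 := by ring
    have bb2 : (sc+sd) * |u1-u2| * q^7 ≤ (2*K*q^3)*(4*K^2) := by
      have hscd : sc+sd ≤ 2*K*q^3 := by linarith
      calc (sc+sd) * |u1-u2| * q^7 = (sc+sd) * (|u1-u2| * q^7) := by ring
      _ ≤ (2*K*q^3)*(4*K^2) :=
          mul_le_mul hscd hdu (by positivity) (by positivity)
    have htq := mul_le_mul_of_nonneg_right tri (pow_nonneg hq0.le 7)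
    have hK3q : q^3 ≤ K^3*q^3 := by
      have := mul_nonneg (by linarith : (0:ℝ) ≤ K^3 - 1) hq3pos.le
      linarith
    linarith [htq, bb1, bb2, hK3q]
  -- final assembly
  have hrw : (muTilde (m - 1) (N - 1) - muTilde (m - 2) N) / sigt (m - 2) N +
        sigt (m - 1) (N - 1) / sigt (m - 2) N * s - s =
      ((muTilde (m - 1) (N - 1) - muTilde (m - 2) N) +
        (sigt (m - 1) (N - 1) - sigt (m - 2) N) * s) / sigt (m - 2) N := by
    have hne : sigt (m - 2) N ≠ 0 := ne_of_gt hsig2pos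
    field_simp
    ring
  rw [hrw, abs_div, abs_of_pos hsig2pos, hqN13]
  have hE : |sigt (m - 1) (N - 1) - sigt (m - 2) N| * |s| ≤ 12*K^3*B := by
    have h := mul_le_mul hdsig hs (abs_nonneg s) (by positivity)
    have h' : (|sigt (m - 1) (N - 1) - sigt (m - 2) N| * |s|) * q^7 ≤ (12*K^3*B) * q^4 := by
      linarith [h]
    exact aux6 _ _ _ hq1 (mul_nonneg (abs_nonneg _) (abs_nonneg _)) h'
  have hnum : |(muTilde (m - 1) (N - 1) - muTilde (m - 2) N) +
      (sigt (m - 1) (N - 1) - sigt (m - 2) N) * s| ≤ 4*K + 12*K^3*B := by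
    have tri : |(muTilde (m - 1) (N - 1) - muTilde (m - 2) N) +
        (sigt (m - 1) (N - 1) - sigt (m - 2) N) * s| ≤
        |muTilde (m - 1) (N - 1) - muTilde (m - 2) N| +
        |sigt (m - 1) (N - 1) - sigt (m - 2) N| * |s| := by
      refine (abs_add_le _ _).trans ?_
      rw [abs_mul]
    linarith [hDmu, hE]
  calc |(muTilde (m - 1) (N - 1) - muTilde (m - 2) N) +
      (sigt (m - 1) (N - 1) - sigt (m - 2) N) * s| / sigt (m - 2) N
      ≤ (4*K + 12*K^3*B) / sigt (m - 2) N := (div_le_div_iff_of_pos_right hsig2pos).mpr hnum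
  _ ≤ (4*K^2 + 12*K^4*B) * (1/q^2) := by
      rw [div_le_iff₀ hsig2pos]
      have hnn : 0 ≤ 4*K + 12*K^3*B := by positivity
      have h := mul_le_mul_of_nonneg_left hsig2lo hnn
      have hq2pos : (0:ℝ) < q^2 := by positivity
      rw [← sub_nonneg]
      have key : (4*K^2 + 12*K^4*B) * (1/q^2) * sigt (m-2) N - (4*K + 12*K^3*B) =
          ((4*K + 12*K^3*B) * (sigt (m-2) N * K) - (4*K + 12*K^3*B) * q^2) / q^2 := by
        field_simp
      rw [key]
      exact div_nonneg (by linarith) hq2pos.le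


theorem stmt_15 (γ : ℝ) (hγ : 1 ≤ γ) (n : ℕ → ℕ) (hn : ∀ N, N + 1 ≤ n N)
    (hlim : Tendsto (fun N : ℕ => (n N : ℝ) / (N : ℝ)) atTop (nhds γ))
    (s₀ s₁ : ℝ) (hs₁ : 0 < s₁) :
    ∃ C > 0, ∃ N₀ : ℕ, ∀ N ≥ N₀, ∀ s ∈ Icc s₀ (s₁ * (N : ℝ) ^ ((1 : ℝ) / 6)),
      |(muTilde ((n N : ℝ) - 1) ((N : ℝ) - 1) - muTilde ((n N : ℝ) - 2) (N : ℝ)) /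
            sigt ((n N : ℝ) - 2) (N : ℝ) +
          sigt ((n N : ℝ) - 1) ((N : ℝ) - 1) / sigt ((n N : ℝ) - 2) (N : ℝ) * s
          - s|
        ≤ C * (N : ℝ) ^ (-(1 : ℝ) / 3) := by
  set K := γ + 1 with hK_def
  have hK : 2 ≤ K := by linarith
  have hK0 : 0 < K := by linarith
  set B := |s₀| + s₁ with hB_def
  have hB : 0 ≤ B := by
    have := abs_nonneg s₀; linarith
  have hev : ∀ᶠ N in atTop, (n N : ℝ) / (N : ℝ) < K := by
    have : Iio K ∈ nhds γ := Iio_mem_nhds (by linarith)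
    exact hlim.eventually this
  obtain ⟨N₁, hN₁⟩ := eventually_atTop.mp hev
  have hCpos : 0 < 4*K^2 + 12*K^4*B + 1 := by
    have h1 : 0 ≤ 4*K^2 := by positivity
    have h2 : 0 ≤ 12*K^4*B := by positivity
    linarith
  refine ⟨4*K^2 + 12*K^4*B + 1, hCpos, max N₁ 4, ?_⟩
  intro N hN s hsmem
  have hN4 : 4 ≤ N := le_trans (le_max_right _ _) hN
  have hNr : (4:ℝ) ≤ (N:ℝ) := by exact_mod_cast hN4
  have hN0 : (0:ℝ) < (N:ℝ) := by linarith
  have hm1 : (N:ℝ) + 1 ≤ (n N : ℝ) := by exact_mod_cast hn N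
  have hm2 : (n N : ℝ) ≤ K * (N:ℝ) := by
    have h := hN₁ N (le_trans (le_max_left _ _) hN)
    have := (div_lt_iff₀ hN0).mp h
    linarith
  have hq1 : (1:ℝ) ≤ (N:ℝ) ^ ((1:ℝ)/6) := by
    calc (1:ℝ) = (1:ℝ) ^ ((1:ℝ)/6) := (Real.one_rpow _).symm
    _ ≤ (N:ℝ) ^ ((1:ℝ)/6) := Real.rpow_le_rpow zero_le_one (by linarith) (by norm_num)
  have hs_abs : |s| ≤ B * (N:ℝ) ^ ((1:ℝ)/6) := by
    obtain ⟨hs1, hs2⟩ := hsmem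
    rw [abs_le]
    constructor
    · have h1 : -|s₀| ≤ s₀ := neg_abs_le s₀
      have h2 : |s₀| ≤ |s₀| * (N:ℝ) ^ ((1:ℝ)/6) :=
        le_mul_of_one_le_right (abs_nonneg _) hq1
      have h3 : 0 ≤ s₁ * (N:ℝ) ^ ((1:ℝ)/6) := by positivity
      rw [hB_def]
      nlinarith
    · have h2 : 0 ≤ |s₀| * (N:ℝ) ^ ((1:ℝ)/6) := by positivity
      rw [hB_def]
      nlinarith
  have key := main_est K (N:ℝ) (n N : ℝ) s B hK hNr hm1 hm2 hB hs_abs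
  have hpow : 0 < (N:ℝ) ^ (-(1:ℝ)/3) := Real.rpow_pos_of_pos hN0 _
  calc |(muTilde ((n N : ℝ) - 1) ((N : ℝ) - 1) - muTilde ((n N : ℝ) - 2) (N : ℝ)) /
            sigt ((n N : ℝ) - 2) (N : ℝ) +
          sigt ((n N : ℝ) - 1) ((N : ℝ) - 1) / sigt ((n N : ℝ) - 2) (N : ℝ) * s
          - s| ≤ (4*K^2 + 12*K^4*B) * (N:ℝ) ^ (-(1:ℝ)/3) := key
  _ ≤ (4*K^2 + 12*K^4*B + 1) * (N:ℝ) ^ (-(1:ℝ)/3) := by nlinarith [hpow]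
end

section
/- Let N ≥ 2 be an even integer and let α > −1 be a real number. Then ∫₀^∞ x^{α/2} · e^{−x/2} · L_{N−1}^{α+1}(x) dx = 0. -/
open Real MeasureTheory Set

/-- Generalized Laguerre polynomial
L_N^α(x) = Σ_{k=0}^N (−1)^k · Γ(N+α+1)/(Γ(k+α+1)·(N−k)!·k!) · x^k. -/
noncomputable def laguerreL (N : ℕ) (α : ℝ) (x : ℝ) : ℝ :=
  ∑ k ∈ Finset.range (N + 1),
    (-1 : ℝ) ^ k *
      (Real.Gamma ((N : ℝ) + α + 1) /
        (Real.Gamma ((k : ℝ) + α + 1) * (Nat.factorial (N - k)) * (Nat.factorial k))) *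
      x ^ k

/-!
Expanding `L_M^{2β+1}` into monomials, each moment `∫ x^(β+k) e^(-x/2)` equals
`2^(β+k+1) Γ(β+k+1)`, and `Γ(β+k+1) Γ(β+1) / Γ(k+2β+2)` is the Beta integral
`∫₀¹ t^(β+k) (1-t)^β`. Summing under the integral with the binomial theorem turns the whole
integral into a constant times `∫₀¹ t^β (1-t)^β (1-2t)^M`. For odd `M = N - 1` this
vanishes: the weight is symmetric under `t ↦ 1 - t`, while `(1 - 2t)^M` changes sign.
-/

theorem intervalIntegrable_rpow_mul_one_sub_rpow {a b : ℝ} (ha : -1 < a) (hb : -1 < b) :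
    IntervalIntegrable (fun t : ℝ => t ^ a * (1 - t) ^ b) volume 0 1 := by
  have left : IntervalIntegrable (fun t : ℝ => t ^ a * (1 - t) ^ b) volume 0 (1 / 2) := by
    refine (intervalIntegral.intervalIntegrable_rpow' ha).mul_continuousOn
      (ContinuousOn.rpow_const (by fun_prop) fun t ht => Or.inl ?_)
    rw [uIcc_of_le (by norm_num)] at ht
    linarith [ht.2]
  have right : IntervalIntegrable (fun t : ℝ => t ^ a * (1 - t) ^ b) volume (1 / 2) 1 := by
    have h := ((intervalIntegral.intervalIntegrable_rpow' hb (a := 0) (b := 1 / 2)).comp_sub_left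
      1).symm
    norm_num at h
    refine (h.mul_continuousOn (g := fun t : ℝ => t ^ a)
      (ContinuousOn.rpow_const (by fun_prop) fun t ht => Or.inl ?_)).congr ?_
    · rw [uIcc_of_le (by norm_num)] at ht
      linarith [ht.1]
    · exact fun t _ => mul_comm _ _
  exact left.trans right

theorem integral_rpow_mul_one_sub_rpow {a b : ℝ} (ha : 0 < a) (hb : 0 < b) :
    ∫ t in (0 : ℝ)..1, t ^ (a - 1) * (1 - t) ^ (b - 1)
      = Gamma a * Gamma b / Gamma (a + b) := by
  have key := Complex.Gamma_mul_Gamma_eq_betaIntegral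
    (s := (a : ℂ)) (t := (b : ℂ)) (by simpa using ha) (by simpa using hb)
  have hbeta : Complex.betaIntegral a b
      = ((∫ t in (0 : ℝ)..1, t ^ (a - 1) * (1 - t) ^ (b - 1) : ℝ) : ℂ) := by
    rw [Complex.betaIntegral, ← intervalIntegral.integral_ofReal]
    refine intervalIntegral.integral_congr fun x hx => ?_
    rw [uIcc_of_le zero_le_one] at hx
    push_cast
    rw [Complex.ofReal_cpow hx.1, Complex.ofReal_cpow (by linarith [hx.2])]
    push_cast
    ring
  rw [hbeta, ← Complex.ofReal_add, Complex.Gamma_ofReal, Complex.Gamma_ofReal,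
    Complex.Gamma_ofReal] at key
  rw [eq_div_iff (Gamma_pos_of_pos (add_pos ha hb)).ne']
  exact_mod_cast (key.trans (mul_comm _ _)).symm

theorem integral_rpow_mul_one_sub_rpow_mul_one_sub_two_mul_pow_of_odd (b : ℝ) {M : ℕ}
    (hM : Odd M) : ∫ t in (0 : ℝ)..1, t ^ b * (1 - t) ^ b * (1 - 2 * t) ^ M = 0 := by
  set f : ℝ → ℝ := fun t => t ^ b * (1 - t) ^ b * (1 - 2 * t) ^ M
  have antisymm : ∀ t, f (1 - t) = -f t := fun t => by
    simp only [f, sub_sub_cancel, show (1 : ℝ) - 2 * (1 - t) = -(1 - 2 * t) by ring, hM.neg_pow]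
    ring
  have reflect : ∫ t in (0 : ℝ)..1, f (1 - t) = ∫ t in (0 : ℝ)..1, f t := by
    simp [intervalIntegral.integral_comp_sub_left f 1]
  simp_rw [antisymm, intervalIntegral.integral_neg] at reflect
  linarith

theorem integrableOn_rpow_mul_exp_neg_half {s : ℝ} (hs : -1 < s) :
    IntegrableOn (fun x : ℝ => x ^ s * exp (-x / 2)) (Ioi 0) := by
  have h := integrableOn_rpow_mul_exp_neg_mul_rpow (p := 1) (b := 1 / 2) hs one_pos one_half_pos
  simp only [rpow_one] at h
  refine h.congr_fun (fun x _ => ?_) measurableSet_Ioi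
  ring_nf

theorem integral_rpow_mul_exp_neg_half {s : ℝ} (hs : -1 < s) :
    ∫ x in Ioi (0 : ℝ), x ^ s * exp (-x / 2) = 2 ^ (s + 1) * Gamma (s + 1) := by
  have h := integral_rpow_mul_exp_neg_mul_Ioi (a := s + 1) (r := 1 / 2) (by linarith) one_half_pos
  norm_num at h
  rw [← h]
  congr! 4 with x
  ring

noncomputable def laguerreCoeff (N : ℕ) (α : ℝ) (k : ℕ) : ℝ :=
  (-1) ^ k * (Gamma ((N : ℝ) + α + 1) /
    (Gamma ((k : ℝ) + α + 1) * (Nat.factorial (N - k)) * (Nat.factorial k)))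

theorem laguerreL_eq_sum (N : ℕ) (α x : ℝ) :
    laguerreL N α x = ∑ k ∈ Finset.range (N + 1), laguerreCoeff N α k * x ^ k :=
  rfl

theorem integral_rpow_mul_exp_neg_half_mul_laguerreL (M : ℕ) (α : ℝ) {β : ℝ}
    (hβ : -1 < β) :
    ∫ x in Ioi (0 : ℝ), x ^ β * exp (-x / 2) * laguerreL M α x
      = ∑ k ∈ Finset.range (M + 1),
          laguerreCoeff M α k * (2 ^ (β + k + 1) * Gamma (β + k + 1)) := by
  have hβk (k : ℕ) : -1 < β + k := by linarith [k.cast_nonneg (α := ℝ)]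
  calc ∫ x in Ioi (0 : ℝ), x ^ β * exp (-x / 2) * laguerreL M α x
      = ∫ x in Ioi (0 : ℝ), ∑ k ∈ Finset.range (M + 1),
          laguerreCoeff M α k * (x ^ (β + k) * exp (-x / 2)) := by
        refine setIntegral_congr_fun measurableSet_Ioi fun x hx => ?_
        simp only [laguerreL_eq_sum, Finset.mul_sum, rpow_add hx, rpow_natCast]
        exact Finset.sum_congr rfl fun k _ => by ring
    _ = _ := by
        rw [integral_finsetSum _ fun k _ =>
          (integrableOn_rpow_mul_exp_neg_half (hβk k)).const_mul _]
        simp only [MeasureTheory.integral_const_mul, integral_rpow_mul_exp_neg_half (hβk _)]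

theorem laguerreCoeff_mul_two_rpow_mul_Gamma {M k : ℕ} (hk : k ≤ M) {β : ℝ}
    (hβ : -(1 / 2) < β) :
    laguerreCoeff M (2 * β + 1) k * (2 ^ (β + k + 1) * Gamma (β + k + 1))
      = Gamma (M + 2 * β + 2) * 2 ^ (β + 1) / (Gamma (β + 1) * M.factorial)
        * (M.choose k * (-2) ^ k * ∫ t in (0 : ℝ)..1, t ^ (β + k) * (1 - t) ^ β) := by
  have hk0 : (0 : ℝ) ≤ k := k.cast_nonneg
  have beta := integral_rpow_mul_one_sub_rpow (a := β + k + 1) (b := β + 1)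
    (by linarith) (by linarith)
  rw [show β + k + 1 - 1 = β + k by ring, show β + 1 - 1 = β by ring,
    show β + k + 1 + (β + 1) = k + (2 * β + 1) + 1 by ring] at beta
  have hGk : Gamma (k + (2 * β + 1) + 1) ≠ 0 := (Gamma_pos_of_pos (by linarith)).ne'
  have hGβ : Gamma (β + 1) ≠ 0 := (Gamma_pos_of_pos (by linarith)).ne'
  rw [beta, Nat.cast_choose ℝ hk, laguerreCoeff,
    show (2 : ℝ) ^ (β + k + 1) = 2 ^ (β + 1) * 2 ^ k by
      rw [add_right_comm, rpow_add two_pos, rpow_natCast],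
    neg_pow (2 : ℝ) k, show (M : ℝ) + (2 * β + 1) + 1 = M + 2 * β + 2 by ring]
  field_simp

theorem sum_choose_mul_neg_two_pow_mul_integral (M : ℕ) {β : ℝ} (hβ : -1 < β) :
    ∑ k ∈ Finset.range (M + 1), (M.choose k : ℝ) * (-2) ^ k *
        ∫ t in (0 : ℝ)..1, t ^ (β + k) * (1 - t) ^ β
      = ∫ t in (0 : ℝ)..1, t ^ β * (1 - t) ^ β * (1 - 2 * t) ^ M := by
  have hβk (k : ℕ) : -1 < β + k := by linarith [k.cast_nonneg (α := ℝ)]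
  simp only [← intervalIntegral.integral_const_mul]
  rw [← intervalIntegral.integral_finsetSum fun k _ =>
    (intervalIntegrable_rpow_mul_one_sub_rpow (hβk k) hβ).const_mul _]
  refine intervalIntegral.integral_congr_ae (Filter.Eventually.of_forall fun t ht => ?_)
  rw [uIoc_of_le zero_le_one] at ht
  rw [show (1 : ℝ) - 2 * t = -2 * t + 1 by ring, add_pow, Finset.mul_sum]
  refine Finset.sum_congr rfl fun k _ => ?_
  rw [rpow_add ht.1, rpow_natCast]
  ring

theorem integral_rpow_mul_exp_neg_half_mul_laguerreL_eq (M : ℕ) {β : ℝ}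
    (hβ : -(1 / 2) < β) :
    ∫ x in Ioi (0 : ℝ), x ^ β * exp (-x / 2) * laguerreL M (2 * β + 1) x
      = Gamma (M + 2 * β + 2) * 2 ^ (β + 1) / (Gamma (β + 1) * M.factorial)
        * ∫ t in (0 : ℝ)..1, t ^ β * (1 - t) ^ β * (1 - 2 * t) ^ M := by
  rw [integral_rpow_mul_exp_neg_half_mul_laguerreL M _ (by linarith),
    Finset.sum_congr rfl fun k hk => laguerreCoeff_mul_two_rpow_mul_Gamma
      (Nat.lt_succ_iff.mp (Finset.mem_range.mp hk)) hβ,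
    ← Finset.mul_sum, sum_choose_mul_neg_two_pow_mul_integral M (by linarith)]

theorem stmt_17 (N : ℕ) (hN : 2 ≤ N) (hev : Even N) (α : ℝ) (hα : -1 < α) :
    ∫ x in Ioi (0 : ℝ), x ^ (α / 2) * Real.exp (-x / 2) * laguerreL (N - 1) (α + 1) x
      = 0 := by
  have hodd : Odd (N - 1) := Nat.Even.sub_odd (by omega) hev odd_one
  have h := integral_rpow_mul_exp_neg_half_mul_laguerreL_eq (N - 1) (β := α / 2) (by linarith)
  rwa [integral_rpow_mul_one_sub_rpow_mul_one_sub_two_mul_pow_of_odd _ hodd, mul_zero,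
    show 2 * (α / 2) + 1 = α + 1 by ring] at h
end
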